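/- arXiv:1708.03289 — 11 statements merged into one kernel-verified Lean document; each statement's English description precedes it below -/
import Mathlib

section
/- On ℝ with density f, define V(x) = ∫₀ˣ f. Then f is a log-convex function of x if and only if f, viewed as a function of the volume coordinate V, is convex. -/
/-!
A continuous function on `ℝ` is convex iff it has a monotone right derivative. Since `V' = f`,
the chain rule gives `(log ∘ f)'₊ = (f ∘ V⁻¹)'₊ ∘ V` for one-sided derivatives, so the two right
derivatives differ by the increasing change of variables `V`, and one is monotone iff the other is.
-/

open Set

section RightDerivative

variable {h r : ℝ → ℝ}

lemma sub_le_mul_sub_of_hasDerivWithinAt_Ici_le {a b C : ℝ} (hab : a ≤ b)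
    (hc : ContinuousOn h (Icc a b)) (hd : ∀ x ∈ Ico a b, HasDerivWithinAt h (r x) (Ici x) x)
    (hr : ∀ x ∈ Ico a b, r x ≤ C) : h b - h a ≤ C * (b - a) := by
  have hB : ∀ x, HasDerivWithinAt (fun t => h a + C * (t - a)) C (Ici x) x := fun x =>
    (((hasDerivAt_id x).sub_const a).const_mul C |>.const_add (h a)).hasDerivWithinAt.congr_deriv
      (mul_one C)
  have := image_le_of_deriv_right_le_deriv_boundary hc hd (by simp) (by fun_prop)
    (fun x _ => hB x) hr (right_mem_Icc.2 hab)
  linarith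

lemma mul_sub_le_sub_of_le_hasDerivWithinAt_Ici {a b C : ℝ} (hab : a ≤ b)
    (hc : ContinuousOn h (Icc a b)) (hd : ∀ x ∈ Ico a b, HasDerivWithinAt h (r x) (Ici x) x)
    (hr : ∀ x ∈ Ico a b, C ≤ r x) : C * (b - a) ≤ h b - h a := by
  have := sub_le_mul_sub_of_hasDerivWithinAt_Ici_le hab hc.neg (fun x hx => (hd x hx).neg)
    (fun x hx => neg_le_neg (hr x hx))
  simp only [Pi.neg_apply] at this
  linarith

lemma convexOn_univ_of_monotone_hasDerivWithinAt_Ici (hc : Continuous h) (hr : Monotone r)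
    (hd : ∀ x, HasDerivWithinAt h (r x) (Ici x) x) : ConvexOn ℝ univ h := by
  refine convexOn_of_slope_mono_adjacent convex_univ fun {a b c} _ _ hab hbc => ?_
  calc (h b - h a) / (b - a) ≤ r b := by
        rw [div_le_iff₀ (sub_pos.2 hab)]
        exact sub_le_mul_sub_of_hasDerivWithinAt_Ici_le hab.le hc.continuousOn
          (fun x _ => hd x) fun x hx => hr hx.2.le
    _ ≤ (h c - h b) / (c - b) := by
        rw [le_div_iff₀ (sub_pos.2 hbc)]
        exact mul_sub_le_sub_of_le_hasDerivWithinAt_Ici hbc.le hc.continuousOn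
          (fun x _ => hd x) fun x hx => hr hx.1

lemma ConvexOn.exists_monotone_hasDerivWithinAt_Ici (hh : ConvexOn ℝ univ h) :
    ∃ r : ℝ → ℝ, Monotone r ∧ ∀ x, HasDerivWithinAt h (r x) (Ici x) x := by
  refine ⟨fun x => derivWithin h (Ioi x) x, fun x y hxy => ?_, fun x => ?_⟩
  · exact hh.monotoneOn_rightDeriv (by simp) (by simp) hxy
  · exact (hh.hasDerivWithinAt_rightDeriv_of_mem_interior (by simp)).Ici_of_Ioi

end RightDerivative

/-- The derivatives of `ψ` and `φ` cancel, so `ψ ∘ G ∘ φ` has the monotone right derivative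
`G'₊ ∘ φ`. -/
lemma ConvexOn.comp_comp_of_deriv_mul_deriv_eq_one {G ψ φ ψ' φ' : ℝ → ℝ}
    (hG : ConvexOn ℝ univ G) (hφ : Monotone φ) (hψd : ∀ x, HasDerivAt ψ (ψ' x) (G (φ x)))
    (hφd : ∀ x, HasDerivAt φ (φ' x) x) (hone : ∀ x, ψ' x * φ' x = 1) :
    ConvexOn ℝ univ (ψ ∘ G ∘ φ) := by
  obtain ⟨r, hr, hGd⟩ := hG.exists_monotone_hasDerivWithinAt_Ici
  have hGc : Continuous G := continuousOn_univ.1 (hG.continuousOn isOpen_univ)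
  refine convexOn_univ_of_monotone_hasDerivWithinAt_Ici (r := r ∘ φ)
    (continuous_iff_continuousAt.2 fun x =>
      (hψd x).continuousAt.comp (f := G ∘ φ) (hGc.continuousAt.comp (hφd x).continuousAt))
    (hr.comp hφ) fun x => ?_
  have := (hψd x).comp_hasDerivWithinAt x
    ((hGd (φ x)).comp x (hφd x).hasDerivWithinAt hφ.mapsTo_Ici)
  rwa [mul_left_comm, hone, mul_one] at this

theorem logconvex_iff_convex_in_volume_coordinate_general (f : ℝ → ℝ)
    (hf_pos : ∀ y, 0 < f y) (hf_cont : Continuous f)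
    (V : ℝ → ℝ) (hV : ∀ x, V x = ∫ t in (0:ℝ)..x, f t)
    (xOf : ℝ → ℝ) (hright : ∀ v, V (xOf v) = v) :
    ConvexOn ℝ Set.univ (fun x => Real.log (f x)) ↔
      ConvexOn ℝ Set.univ (fun v => f (xOf v)) := by
  have hVd : ∀ x, HasDerivAt V (f x) x := fun x =>
    (funext hV ▸ hf_cont.integral_hasStrictDerivAt 0 x).hasDerivAt
  have hVmono : StrictMono V := strictMono_of_hasDerivAt_pos hVd hf_pos
  have hleft : ∀ x, xOf (V x) = x := fun x => hVmono.injective (hright _)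
  let e : ℝ ≃o ℝ := hVmono.orderIsoOfRightInverse V xOf hright
  have hxOf_mono : Monotone xOf := e.symm.monotone
  have hxOf_cont : Continuous xOf := e.symm.continuous
  have hxOfd : ∀ v, HasDerivAt xOf (f (xOf v))⁻¹ v := fun v =>
    (hVd (xOf v)).of_local_left_inverse hxOf_cont.continuousAt (hf_pos _).ne'
      (.of_forall hright)
  constructor
  · intro hlog
    -- `f ∘ xOf = exp ∘ (log ∘ f) ∘ xOf`
    have := hlog.comp_comp_of_deriv_mul_deriv_eq_one hxOf_mono (fun v => Real.hasDerivAt_exp _)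
      hxOfd fun v => by simp [Real.exp_log (hf_pos _), (hf_pos _).ne']
    simpa [Function.comp_def, Real.exp_log (hf_pos _)] using this
  · intro hvol
    -- `log ∘ f = log ∘ (f ∘ xOf) ∘ V`
    have := hvol.comp_comp_of_deriv_mul_deriv_eq_one hVmono.monotone
      (fun x => Real.hasDerivAt_log (hf_pos _).ne') hVd
      fun x => by simp [hleft, (hf_pos _).ne']
    simpa [Function.comp_def, hleft] using this

/-- Volume coordinate lemma: for a positive continuous density `f` on `ℝ` with volume
coordinate `V x = ∫₀ˣ f`, the density `f` is log-convex as a function of `x` if and only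
if `f` is convex as a function of the volume coordinate (i.e. `f ∘ V⁻¹` is convex, where
`xOf` is the inverse of `V`). -/
theorem logconvex_iff_convex_in_volume_coordinate (f : ℝ → ℝ)
    (hf_pos : ∀ y, 0 < f y) (hf_cont : Continuous f)
    (V : ℝ → ℝ) (hV : ∀ x, V x = ∫ t in (0:ℝ)..x, f t)
    (xOf : ℝ → ℝ) (hleft : ∀ x, xOf (V x) = x) (hright : ∀ v, V (xOf v) = v) :
    ConvexOn ℝ Set.univ (fun x => Real.log (f x)) ↔
      ConvexOn ℝ Set.univ (fun v => f (xOf v)) :=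
  logconvex_iff_convex_in_volume_coordinate_general f hf_pos hf_cont V hV xOf hright
end

section
/- Let f be a symmetric (even), strictly log-convex, continuous density on ℝ with g = f ∘ x⁻¹ its expression in volume coordinates (where x ↦ ∫₀ˣ f). Then g grows at least linearly: there exists c > 0 such that g(V) ≥ cV for all sufficiently large V. Moreover ∫₀^∞ 1/g(V) dV diverges. -/
open MeasureTheory intervalIntegral Set

/-- For a symmetric, strictly log-convex, continuous density `f` on `ℝ`, the density
`g = f ∘ xOf` in volume coordinates grows at least linearly (there is `c > 0` with
`g V ≥ c * V` for all large `V`), yet `∫₀^∞ 1/g` diverges. -/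
theorem volume_density_approx_linear (f : ℝ → ℝ)
    (hf_pos : ∀ y, 0 < f y) (hf_cont : Continuous f)
    (hf_even : ∀ y, f (-y) = f y)
    (hf_strict_logconvex : StrictConvexOn ℝ Set.univ (fun x => Real.log (f x)))
    (V : ℝ → ℝ) (hV : ∀ x, V x = ∫ t in (0:ℝ)..x, f t)
    (xOf : ℝ → ℝ) (hleft : ∀ x, xOf (V x) = x) (hright : ∀ v, V (xOf v) = v)
    (g : ℝ → ℝ) (hg : ∀ v, g v = f (xOf v)) :
    (∃ c > 0, ∀ᶠ v in Filter.atTop, c * v ≤ g v) ∧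
      ¬ MeasureTheory.IntegrableOn (fun v => 1 / g v) (Set.Ioi 0) := by
  have hV0 : V 0 = 0 := by rw [hV]; simp
  -- V is strictly monotone
  have hVsub : ∀ a b : ℝ, V b - V a = ∫ t in a..b, f t := by
    intro a b
    rw [hV, hV]
    exact integral_interval_sub_left (hf_cont.intervalIntegrable _ _)
      (hf_cont.intervalIntegrable _ _)
  have hVmono : StrictMono V := by
    intro a b hab
    have h := hVsub a b
    have hpos : 0 < ∫ t in a..b, f t :=
      intervalIntegral_pos_of_pos (hf_cont.intervalIntegrable _ _) hf_pos hab
    linarith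
  -- xOf is continuous
  have hVsurj : Function.Surjective V := fun v => ⟨xOf v, hright v⟩
  set e := StrictMono.orderIsoOfSurjective V hVmono hVsurj with he
  have hxOf_eq : xOf = fun v => e.symm v := by
    funext v
    apply hVmono.injective
    rw [hright]
    exact (StrictMono.orderIsoOfSurjective_self_symm_apply V hVmono hVsurj v).symm
  have hxOf_cont : Continuous xOf := by
    rw [hxOf_eq]
    exact e.symm.toHomeomorph.continuous
  have hgcont : Continuous g := by
    have : g = f ∘ xOf := funext hg
    rw [this]
    exact hf_cont.comp hxOf_cont
  have hgpos : ∀ v, 0 < g v := fun v => by rw [hg]; exact hf_pos _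
  -- derivative of V
  have hVderiv : ∀ x : ℝ, HasDerivAt V (f x) x := by
    intro x
    have hVfun : V = fun x => ∫ t in (0:ℝ)..x, f t := funext hV
    rw [hVfun]
    exact intervalIntegral.integral_hasDerivAt_right (hf_cont.intervalIntegrable _ _)
      (hf_cont.stronglyMeasurable.stronglyMeasurableAtFilter) hf_cont.continuousAt
  -- the slope constant
  set φ : ℝ → ℝ := fun x => Real.log (f x) with hφdef
  set s : ℝ := φ 1 - φ 0 with hs
  have hφconv : ConvexOn ℝ Set.univ φ := hf_strict_logconvex.convexOn
  have hs_pos : 0 < s := by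
    have h := hf_strict_logconvex.2 (Set.mem_univ (-1 : ℝ)) (Set.mem_univ (1 : ℝ))
      (by norm_num) (show (0:ℝ) < 1/2 by norm_num) (show (0:ℝ) < 1/2 by norm_num)
      (by norm_num)
    have heq : f ((1/2 : ℝ) • (-1 : ℝ) + (1/2 : ℝ) • (1 : ℝ)) = f 0 := by norm_num
    have h1 : φ (-1) = φ 1 := by simp only [hφdef, hf_even]
    simp only [smul_eq_mul] at h
    have h0 : φ 0 < 1/2 * φ (-1) + 1/2 * φ 1 := by
      have : ((1/2 : ℝ) * (-1 : ℝ) + (1/2 : ℝ) * (1 : ℝ)) = 0 := by norm_num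
      rwa [this] at h
    rw [h1] at h0
    simp only [hs]
    linarith
  -- slope bound: for 1 ≤ t ≤ x, f t ≤ f x * exp (s * (t - x))
  have hslope : ∀ x t : ℝ, 1 ≤ t → t ≤ x → f t ≤ f x * Real.exp (s * (t - x)) := by
    intro x t ht htx
    rcases eq_or_lt_of_le htx with rfl | htx
    · simp [le_of_eq, (hf_pos t).le]
    have key : s * (x - t) ≤ φ x - φ t := by
      have h01 : (0:ℝ) < 1 := one_pos
      rcases eq_or_lt_of_le ht with rfl | ht1
      · -- t = 1
        have := hφconv.slope_mono_adjacent (Set.mem_univ (0:ℝ)) (Set.mem_univ x) h01 htx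
        rw [div_le_div_iff₀ (by norm_num) (by linarith)] at this
        simp only [hs] at *
        nlinarith
      · -- 1 < t
        have h1 := hφconv.slope_mono_adjacent (Set.mem_univ (0:ℝ)) (Set.mem_univ t) h01 ht1
        have h2 := hφconv.slope_mono_adjacent (Set.mem_univ (1:ℝ)) (Set.mem_univ x) ht1 htx
        have h3 : (φ 1 - φ 0) / (1 - 0) ≤ (φ x - φ t) / (x - t) := le_trans h1 h2
        rw [div_le_div_iff₀ (by norm_num) (by linarith)] at h3
        simp only [hs]
        nlinarith
    have hlog : Real.log (f t) ≤ Real.log (f x) + s * (t - x) := by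
      simp only [hφdef] at key; nlinarith
    calc f t = Real.exp (Real.log (f t)) := (Real.exp_log (hf_pos t)).symm
      _ ≤ Real.exp (Real.log (f x) + s * (t - x)) := Real.exp_le_exp.mpr hlog
      _ = f x * Real.exp (s * (t - x)) := by rw [Real.exp_add, Real.exp_log (hf_pos x)]
  -- integral bound: V x ≤ V 1 + f x / s for x ≥ 1
  have hVbound : ∀ x : ℝ, 1 ≤ x → V x ≤ V 1 + f x / s := by
    intro x hx
    have hint : (∫ t in (1:ℝ)..x, f t) ≤ ∫ t in (1:ℝ)..x, f x * Real.exp (s * (t - x)) := by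
      apply intervalIntegral.integral_mono_on hx (hf_cont.intervalIntegrable _ _)
      · exact (Continuous.intervalIntegrable (by continuity) _ _)
      · intro t ht
        exact hslope x t ht.1 ht.2
    have hexp : (∫ t in (1:ℝ)..x, f x * Real.exp (s * (t - x)))
        = f x * ((Real.exp (s * (x - x)) / s) - Real.exp (s * (1 - x)) / s) := by
      rw [intervalIntegral.integral_const_mul]
      congr 1
      have hH : ∀ t ∈ Set.uIcc (1:ℝ) x,
          HasDerivAt (fun t : ℝ => Real.exp (s * (t - x)) / s) (Real.exp (s * (t - x))) t := by
        intro t _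
        have h2 : HasDerivAt (fun t : ℝ => Real.exp (s * (t - x)))
            (Real.exp (s * (t - x)) * s) t :=
          (Real.hasDerivAt_exp _).comp t
            (by simpa using ((hasDerivAt_id t).sub_const x).const_mul s)
        have h3 := h2.div_const s
        simpa [mul_div_assoc, mul_div_cancel_right₀ _ (ne_of_gt hs_pos)] using h3
      have hcalc := intervalIntegral.integral_eq_sub_of_hasDerivAt hH
        (Continuous.intervalIntegrable (by continuity) _ _)
      simpa using hcalc
    have hexp_le : f x * ((Real.exp (s * (x - x)) / s) - Real.exp (s * (1 - x)) / s) ≤ f x / s := by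
      have h1 : Real.exp (s * (x - x)) = 1 := by simp
      rw [h1]
      have h2 : 0 < Real.exp (s * (1 - x)) := Real.exp_pos _
      have h3 : 0 < f x := hf_pos x
      have h4 : (1/s - Real.exp (s * (1 - x))/s) ≤ 1/s :=
        sub_le_self _ (by positivity)
      calc f x * (1/s - Real.exp (s * (1 - x))/s) ≤ f x * (1/s) :=
            mul_le_mul_of_nonneg_left h4 h3.le
        _ = f x / s := by ring
    have := hVsub 1 x
    linarith
  constructor
  · -- linear growth
    refine ⟨s/2, by linarith, ?_⟩
    rw [Filter.eventually_atTop]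
    refine ⟨max (2 * V 1) (V 1), fun v hv => ?_⟩
    set x := xOf v with hx
    have hVx : V x = v := hright v
    have hx1 : 1 ≤ x := by
      by_contra h
      push_neg at h
      have := hVmono h
      rw [hVx] at this
      have := le_max_right (2 * V 1) (V 1)
      linarith [le_trans this hv]
    have hb := hVbound x hx1
    rw [hVx] at hb
    have h2V : 2 * V 1 ≤ v := le_trans (le_max_left _ _) hv
    have : s * (v - V 1) ≤ f x := by
      have : v - V 1 ≤ f x / s := by linarith
      calc s * (v - V 1) ≤ s * (f x / s) := by
            apply mul_le_mul_of_nonneg_left this hs_pos.le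
        _ = f x := by field_simp
    rw [hg v, ← hx]
    have h6 : s * (v / 2) ≤ s * (v - V 1) :=
      mul_le_mul_of_nonneg_left (by linarith) hs_pos.le
    have h7 : s / 2 * v = s * (v / 2) := by ring
    clear_value x s φ
    linarith
  · -- divergence of the integral
    intro hInt
    have hnneg : ∀ v, 0 ≤ (fun v => 1 / g v) v := fun v =>
      le_of_lt (div_pos one_pos (hgpos v))
    have key : ∀ b : ℝ, 0 ≤ b → (∫ v in (0:ℝ)..(V b), 1 / g v) = b := by
      intro b hb
      have hchg := intervalIntegral.integral_comp_smul_deriv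
        (f := V) (f' := f) (g := fun u => 1 / g u) (a := (0:ℝ)) (b := b)
        (fun x _ => hVderiv x) hf_cont.continuousOn
        (continuous_const.div hgcont (fun v => (hgpos v).ne'))
      rw [hV0] at hchg
      rw [← hchg]
      have : ∀ x : ℝ, f x • ((fun u => 1 / g u) ∘ V) x = 1 := by
        intro x
        simp only [Function.comp_apply, smul_eq_mul, hg, hleft]
        rw [mul_one_div, div_self (hf_pos x).ne']
      rw [intervalIntegral.integral_congr (fun x _ => this x)]
      simp
    set M := ∫ v in Set.Ioi (0:ℝ), 1 / g v with hM
    have hble : ∀ b : ℝ, 0 ≤ b → b ≤ M := by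
      intro b hb
      have hVb : 0 ≤ V b := by
        rcases eq_or_lt_of_le hb with rfl | hb'
        · rw [hV0]
        · have := hVmono hb'; rw [hV0] at this; exact this.le
      rw [← key b hb, intervalIntegral.integral_of_le hVb]
      apply MeasureTheory.setIntegral_mono_set hInt
      · exact Filter.Eventually.of_forall hnneg
      · exact MeasureTheory.ae_of_all _ (fun x hx => Set.Ioc_subset_Ioi_self hx)
    have := hble (max (M + 1) 0) (le_max_right _ _)
    have := le_max_left (M + 1) (0:ℝ)
    linarith
end

section
/- Let f = e^ψ be a symmetric, strictly log-convex, C^1 density on ℝ, and for x > 0 set V(x) = ∫₀ˣ f. Then liminf_{x→∞} V(x)·ψ'(x)/f(x) ≥ 1. -/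
open Filter Set Real Topology

/-!
Since `ψ'` is increasing and vanishes at `0` (`ψ` is even), `V x * ψ' x ≥ ∫₀ˣ f ψ' = f x - f 0`,
and `f → ∞` because `ψ` grows at least linearly; so the ratio is eventually at least
`1 - f 0 / f x → 1`. Because `liminf` of a function that is not eventually bounded above is a junk value in
`ℝ`, one also needs the ratio not to be eventually `≥ a > 1`: `w = V / f` satisfies
`w' = 1 - V ψ' / f`, so this would drive `w ≥ 0` to `-∞`.
-/

lemma Function.Even.deriv_zero {ψ : ℝ → ℝ} (h : Function.Even ψ) : deriv ψ 0 = 0 := by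
  have h0 := deriv_comp_neg (f := ψ) (x := 0)
  simp only [neg_zero, show (fun y => ψ (-y)) = ψ from funext h] at h0
  linarith

lemma ConvexOn.tendsto_atTop_of_deriv_pos {ψ : ℝ → ℝ} {a : ℝ} (hψ : ConvexOn ℝ univ ψ)
    (hd : DifferentiableAt ℝ ψ a) (hpos : 0 < deriv ψ a) : Tendsto ψ atTop atTop := by
  have htangent : Tendsto (fun x => ψ a + deriv ψ a * (x - a)) atTop atTop :=
    tendsto_atTop_add_const_left _ _ <|
      (tendsto_atTop_add_const_right _ _ tendsto_id).const_mul_atTop hpos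
  refine tendsto_atTop_mono' _ ?_ htangent
  filter_upwards [eventually_gt_atTop a] with x hx
  have := hψ.deriv_le_slope (mem_univ a) (mem_univ x) hx hd
  rw [slope_def_field, le_div_iff₀ (sub_pos.2 hx)] at this
  linarith

lemma intervalIntegral.integral_mul_le_integral_mul_of_monotone {f g : ℝ → ℝ} {a b : ℝ}
    (hf : Continuous f) (hf_nonneg : ∀ t, 0 ≤ f t) (hg : Continuous g) (hg_mono : Monotone g)
    (hab : a ≤ b) : ∫ t in a..b, f t * g t ≤ (∫ t in a..b, f t) * g b := by
  rw [← intervalIntegral.integral_mul_const]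
  exact intervalIntegral.integral_mono_on hab ((hf.mul hg).intervalIntegrable a b)
    ((hf.mul continuous_const).intervalIntegrable a b)
    fun t ht => mul_le_mul_of_nonneg_left (hg_mono ht.2) (hf_nonneg t)

lemma tendsto_atBot_of_deriv_le_neg {w w' : ℝ → ℝ} {c : ℝ} (hc : 0 < c)
    (hderiv : ∀ᶠ x in atTop, HasDerivAt w (w' x) x) (hle : ∀ᶠ x in atTop, w' x ≤ -c) :
    Tendsto w atTop atBot := by
  obtain ⟨M, hM⟩ := eventually_atTop.1 (hderiv.and hle)
  have hline : Tendsto (fun x => w M - c * (x - M)) atTop atBot :=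
    tendsto_atBot_add_const_left _ _ <| tendsto_neg_atTop_atBot.comp <|
      (tendsto_atTop_add_const_right _ _ tendsto_id).const_mul_atTop hc
  refine tendsto_atBot_mono' _ ?_ hline
  filter_upwards [eventually_ge_atTop M] with x hx
  have := (convex_Ici M).image_sub_le_mul_sub_of_deriv_le
    (fun y hy => (hM y hy).1.continuousAt.continuousWithinAt)
    (fun y hy => (hM y (interior_subset hy)).1.differentiableAt.differentiableWithinAt)
    (fun y hy => ((hM y (interior_subset hy)).1.deriv ▸ (hM y (interior_subset hy)).2))
    M self_mem_Ici x hx hx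
  linarith

section LogConvexDensity

variable {ψ : ℝ → ℝ}

lemma exp_sub_exp_le_integral_exp_mul_deriv (hψ : ContDiff ℝ 1 ψ) (hmono : Monotone (deriv ψ))
    {x : ℝ} (hx : 0 ≤ x) :
    exp (ψ x) - exp (ψ 0) ≤ (∫ t in (0 : ℝ)..x, exp (ψ t)) * deriv ψ x := by
  have hdψ : Differentiable ℝ ψ := hψ.differentiable one_ne_zero
  have hcont : Continuous fun t => exp (ψ t) := continuous_exp.comp hdψ.continuous
  have hcψ' : Continuous (deriv ψ) := hψ.continuous_deriv le_rfl
  rw [← intervalIntegral.integral_eq_sub_of_hasDerivAt (fun t _ => (hdψ t).hasDerivAt.exp)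
    ((hcont.mul hcψ').intervalIntegrable 0 x)]
  exact intervalIntegral.integral_mul_le_integral_mul_of_monotone hcont (fun t => (exp_pos _).le)
    hcψ' hmono hx

lemma not_eventually_le_integral_exp_mul_deriv_div (hψ : Differentiable ℝ ψ) {a : ℝ}
    (ha : 1 < a) :
    ¬ ∀ᶠ x in atTop, a ≤ (∫ t in (0 : ℝ)..x, exp (ψ t)) * deriv ψ x / exp (ψ x) := by
  intro h
  set V : ℝ → ℝ := fun x => ∫ t in (0 : ℝ)..x, exp (ψ t)
  have hcont : Continuous fun t => exp (ψ t) := continuous_exp.comp hψ.continuous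
  have hw : ∀ x, HasDerivAt (fun x => V x / exp (ψ x)) (1 - V x * deriv ψ x / exp (ψ x)) x := by
    intro x
    refine ((hcont.integral_hasStrictDerivAt 0 x).hasDerivAt.div (hψ x).hasDerivAt.exp
      (exp_pos _).ne').congr_deriv ?_
    field_simp
    ring
  have hw_bot : Tendsto (fun x => V x / exp (ψ x)) atTop atBot :=
    tendsto_atBot_of_deriv_le_neg (w' := fun x => 1 - V x * deriv ψ x / exp (ψ x))
      (sub_pos.2 ha) (Eventually.of_forall hw) (h.mono fun x hx => by linarith)
  have hw_nonneg : ∀ᶠ x in atTop, 0 ≤ V x / exp (ψ x) :=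
    (eventually_ge_atTop 0).mono fun x hx => div_nonneg
      (intervalIntegral.integral_nonneg hx fun t _ => (exp_pos _).le) (exp_pos _).le
  obtain ⟨x, hx_neg, hx_nonneg⟩ := ((hw_bot.eventually_lt_atBot 0).and hw_nonneg).exists
  linarith

end LogConvexDensity

/-- Fundamental Bounding Lemma, lower bound: for `f = e^ψ` symmetric, strictly
log-convex and `C¹`, with `V x = ∫₀ˣ f`, we have `liminf_{x→∞} V(x) ψ'(x) / f(x) ≥ 1`. -/
theorem fundamental_bounding_liminf (ψ : ℝ → ℝ) (hψ : ContDiff ℝ 1 ψ)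
    (hψ_even : ∀ y, ψ (-y) = ψ y) (hψ_strict_convex : StrictConvexOn ℝ Set.univ ψ)
    (f : ℝ → ℝ) (hf : ∀ y, f y = Real.exp (ψ y))
    (V : ℝ → ℝ) (hV : ∀ x, V x = ∫ t in (0:ℝ)..x, f t) :
    1 ≤ Filter.liminf (fun x => V x * deriv ψ x / f x) Filter.atTop := by
  obtain rfl : f = fun y => exp (ψ y) := funext hf
  obtain rfl : V = fun x => ∫ t in (0:ℝ)..x, exp (ψ t) := funext hV
  have hdψ : Differentiable ℝ ψ := hψ.differentiable one_ne_zero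
  have hmono : StrictMono (deriv ψ) := fun a b hab =>
    hψ_strict_convex.strictMonoOn_deriv (fun x _ => hdψ x) (mem_univ a) (mem_univ b) hab
  have hf_top : Tendsto (fun x => exp (ψ x)) atTop atTop :=
    tendsto_exp_atTop.comp <| hψ_strict_convex.convexOn.tendsto_atTop_of_deriv_pos (hdψ 1)
      (Function.Even.deriv_zero hψ_even ▸ hmono one_pos)
  have hlower : Tendsto (fun x => 1 - exp (ψ 0) / exp (ψ x)) atTop (𝓝 1) := by
    simpa using tendsto_const_nhds.sub (hf_top.const_div_atTop (exp (ψ 0)))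
  have hle : ∀ᶠ x in atTop, 1 - exp (ψ 0) / exp (ψ x) ≤
      (∫ t in (0:ℝ)..x, exp (ψ t)) * deriv ψ x / exp (ψ x) := by
    filter_upwards [eventually_ge_atTop 0] with x hx
    rw [one_sub_div (exp_pos _).ne']
    exact div_le_div_of_nonneg_right (exp_sub_exp_le_integral_exp_mul_deriv hψ hmono.monotone hx)
      (exp_pos _).le
  have hcobdd : IsCoboundedUnder (· ≥ ·) atTop
      fun x => (∫ t in (0:ℝ)..x, exp (ψ t)) * deriv ψ x / exp (ψ x) :=
    ⟨1, fun a ha => not_lt.1 fun h => not_eventually_le_integral_exp_mul_deriv_div hdψ h ha⟩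
  calc (1 : ℝ) = liminf (fun x => 1 - exp (ψ 0) / exp (ψ x)) atTop := hlower.liminf_eq.symm
    _ ≤ _ := liminf_le_liminf hle hlower.isBoundedUnder_ge hcobdd
end

section
/- Let f = e^ψ be a symmetric, strictly log-convex, C^2 density on ℝ, set V(x) = ∫₀ˣ f, and suppose M > 1 is such that ψ'(x)² ≥ M·ψ''(x) for all sufficiently large x. Then limsup_{x→∞} V(x)·ψ'(x)/f(x) ≤ M/(M−1). -/
/-!
With `g = f / ψ'` one has `g' = f (1 - ψ'' / ψ'²) ≥ (1 - 1/M) f` for large `x`, so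
`g - (1 - 1/M) V` is eventually nondecreasing. Hence `V ≤ C + M/(M-1) · g`, and since
`V → ∞` (as `f ≥ f 0 > 0`) also `g → ∞`, so `V ψ' / f = V / g` has limsup at most `M/(M-1)`.
-/

open Filter Set Real

theorem deriv_eq_zero_of_even {ψ : ℝ → ℝ} (heven : ∀ y, ψ (-y) = ψ y) : deriv ψ 0 = 0 := by
  have h := deriv_comp_neg ψ 0
  simp only [heven, neg_zero] at h
  linarith

theorem deriv_pos_of_even_of_strictConvexOn {ψ : ℝ → ℝ} (hψ : Differentiable ℝ ψ)
    (heven : ∀ y, ψ (-y) = ψ y) (hconv : StrictConvexOn ℝ univ ψ) {x : ℝ} (hx : 0 < x) :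
    0 < deriv ψ x := by
  simpa [deriv_eq_zero_of_even heven] using
    hconv.strictMonoOn_deriv (fun y _ ↦ hψ y) (mem_univ 0) (mem_univ x) hx

theorem apply_zero_le_of_even_of_convexOn {ψ : ℝ → ℝ} (heven : ∀ y, ψ (-y) = ψ y)
    (hconv : ConvexOn ℝ univ ψ) (y : ℝ) : ψ 0 ≤ ψ y := by
  have := hconv.2 (mem_univ y) (mem_univ (-y)) (by norm_num : (0 : ℝ) ≤ 1 / 2)
    (by norm_num : (0 : ℝ) ≤ 1 / 2) (by norm_num)
  simp only [smul_eq_mul, heven] at this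
  rw [show 1 / 2 * y + 1 / 2 * -y = (0 : ℝ) by ring] at this
  linarith

theorem monotoneOn_sub_const_mul_of_hasDerivAt {g V g' V' : ℝ → ℝ} {a c : ℝ}
    (hg : ∀ x ∈ Ici a, HasDerivAt g (g' x) x) (hV : ∀ x ∈ Ici a, HasDerivAt V (V' x) x)
    (hle : ∀ x ∈ Ici a, c * V' x ≤ g' x) :
    MonotoneOn (fun x ↦ g x - c * V x) (Ici a) := by
  have hderiv : ∀ x ∈ Ici a, HasDerivAt (fun x ↦ g x - c * V x) (g' x - c * V' x) x :=
    fun x hx ↦ (hg x hx).sub ((hV x hx).const_mul c)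
  refine monotoneOn_of_hasDerivWithinAt_nonneg (f' := fun x ↦ g' x - c * V' x) (convex_Ici a)
    (fun x hx ↦ (hderiv x hx).continuousAt.continuousWithinAt) (fun x hx ↦ ?_) (fun x hx ↦ ?_)
  all_goals rw [interior_Ici] at hx
  · exact (hderiv x (Ioi_subset_Ici_self hx)).hasDerivWithinAt
  · exact sub_nonneg.mpr (hle x (Ioi_subset_Ici_self hx))

theorem limsup_div_le_of_monotoneOn_sub {V g : ℝ → ℝ} {a c : ℝ} (hc : 0 < c)
    (hmono : MonotoneOn (fun x ↦ g x - c * V x) (Ici a)) (hV : Tendsto V atTop atTop) :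
    limsup (fun x ↦ V x / g x) atTop ≤ 1 / c := by
  have hgrowth : ∀ᶠ x in atTop, g a - c * V a + c * V x ≤ g x := by
    filter_upwards [eventually_ge_atTop a] with x hx
    linarith [hmono (mem_Ici.mpr le_rfl) (mem_Ici.mpr hx) hx]
  have hg : Tendsto g atTop atTop :=
    tendsto_atTop_mono' atTop hgrowth
      (tendsto_atTop_add_const_left _ _ (hV.const_mul_atTop hc))
  have hbound : ∀ᶠ x in atTop, V x / g x ≤ (V a - g a / c) / g x + 1 / c := by
    filter_upwards [hgrowth, hg.eventually_gt_atTop 0] with x hx hgx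
    rw [div_add' _ _ _ hgx.ne', div_le_div_iff_of_pos_right hgx]
    field_simp
    linarith
  have hlim : Tendsto (fun x ↦ (V a - g a / c) / g x + 1 / c) atTop (nhds (1 / c)) := by
    simpa using (tendsto_const_nhds.div_atTop hg).add_const (1 / c)
  have hnonneg : ∀ᶠ x in atTop, 0 ≤ V x / g x := by
    filter_upwards [hV.eventually_ge_atTop 0, hg.eventually_ge_atTop 0] with x hVx hgx
    exact div_nonneg hVx hgx
  calc limsup (fun x ↦ V x / g x) atTop
      ≤ limsup (fun x ↦ (V a - g a / c) / g x + 1 / c) atTop :=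
        limsup_le_limsup hbound (isCoboundedUnder_le_of_eventually_le _ hnonneg)
          hlim.isBoundedUnder_le
    _ = 1 / c := hlim.limsup_eq

theorem tendsto_integral_atTop_of_const_le {f : ℝ → ℝ} (hf : Continuous f) {m : ℝ}
    (hm : 0 < m) (hle : ∀ t, m ≤ f t) : Tendsto (fun x ↦ ∫ t in (0 : ℝ)..x, f t) atTop atTop := by
  refine tendsto_atTop_mono' atTop ?_ (tendsto_id.atTop_mul_const hm)
  filter_upwards [eventually_ge_atTop 0] with x hx
  calc id x * m = ∫ _ in (0 : ℝ)..x, m := by simp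
    _ ≤ ∫ t in (0 : ℝ)..x, f t :=
      intervalIntegral.integral_mono_on hx intervalIntegrable_const
        (hf.intervalIntegrable 0 x) fun t _ ↦ hle t

theorem hasDerivAt_exp_div_deriv {ψ : ℝ → ℝ} {x : ℝ} (hψ : DifferentiableAt ℝ ψ x)
    (hψ' : DifferentiableAt ℝ (deriv ψ) x) (hx : deriv ψ x ≠ 0) :
    HasDerivAt (fun y ↦ exp (ψ y) / deriv ψ y)
      (exp (ψ x) * (1 - deriv (deriv ψ) x / deriv ψ x ^ 2)) x := by
  refine (hψ.hasDerivAt.exp.fun_div hψ'.hasDerivAt hx).congr_deriv ?_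
  field_simp

theorem sub_one_div_le_one_sub_div_sq {M p q : ℝ} (hM : 0 < M) (hp : p ≠ 0)
    (h : M * q ≤ p ^ 2) : (M - 1) / M ≤ 1 - q / p ^ 2 := by
  have hq : q / p ^ 2 ≤ 1 / M := by
    rw [div_le_div_iff₀ (by positivity) hM]
    linarith
  calc (M - 1) / M = 1 - 1 / M := by field_simp
    _ ≤ 1 - q / p ^ 2 := by linarith

/-- Fundamental Bounding Lemma, upper bound: for `f = e^ψ` symmetric, strictly
log-convex and `C²`, with `V x = ∫₀ˣ f`, if `M > 1` satisfies `ψ'(x)² ≥ M ψ''(x)` for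
all sufficiently large `x`, then `limsup_{x→∞} V(x) ψ'(x) / f(x) ≤ M / (M - 1)`. -/
theorem fundamental_bounding_limsup (ψ : ℝ → ℝ) (hψ : ContDiff ℝ 2 ψ)
    (hψ_even : ∀ y, ψ (-y) = ψ y) (hψ_strict_convex : StrictConvexOn ℝ Set.univ ψ)
    (f : ℝ → ℝ) (hf : ∀ y, f y = Real.exp (ψ y))
    (V : ℝ → ℝ) (hV : ∀ x, V x = ∫ t in (0:ℝ)..x, f t)
    (M : ℝ) (hM : 1 < M)
    (hMψ : ∀ᶠ x in Filter.atTop, M * deriv (deriv ψ) x ≤ (deriv ψ x) ^ 2) :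
    Filter.limsup (fun x => V x * deriv ψ x / f x) Filter.atTop ≤ M / (M - 1) := by
  obtain rfl : f = fun y ↦ exp (ψ y) := funext hf
  obtain rfl : V = fun x ↦ ∫ t in (0 : ℝ)..x, exp (ψ t) := funext hV
  have hψd : Differentiable ℝ ψ := hψ.differentiable (by norm_num)
  have hf_cont : Continuous fun y ↦ exp (ψ y) := continuous_exp.comp hψd.continuous
  obtain ⟨a₀, ha₀⟩ := eventually_atTop.mp hMψ
  set a := max a₀ 1
  have hψ'_pos : ∀ x ∈ Ici a, 0 < deriv ψ x := fun x hx ↦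
    deriv_pos_of_even_of_strictConvexOn hψd hψ_even hψ_strict_convex
      (zero_lt_one.trans_le ((le_max_right _ _).trans hx))
  have hmono : MonotoneOn (fun x ↦ exp (ψ x) / deriv ψ x
      - (M - 1) / M * ∫ t in (0 : ℝ)..x, exp (ψ t)) (Ici a) :=
    monotoneOn_sub_const_mul_of_hasDerivAt
      (fun x hx ↦ hasDerivAt_exp_div_deriv (hψd x) (hψ.differentiable_deriv_two x)
        (hψ'_pos x hx).ne')
      (fun x _ ↦ (hf_cont.integral_hasStrictDerivAt 0 x).hasDerivAt)
      fun x hx ↦ by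
        rw [mul_comm]
        exact mul_le_mul_of_nonneg_left (sub_one_div_le_one_sub_div_sq (by linarith)
          (hψ'_pos x hx).ne' (ha₀ x ((le_max_left _ _).trans hx))) (exp_pos _).le
  have hV_top := tendsto_integral_atTop_of_const_le hf_cont (exp_pos (ψ 0)) fun t ↦
    exp_le_exp.mpr (apply_zero_le_of_even_of_convexOn hψ_even hψ_strict_convex.convexOn t)
  simp_rw [← div_div_eq_mul_div, ← one_div_div (M - 1) M]
  exact limsup_div_le_of_monotoneOn_sub (div_pos (by linarith) (by linarith)) hmono hV_top
end

section
/- Let g: ℝ → ℝ be even, convex, and strictly increasing on [0,∞) (the density in volume coordinates). For fixed 0 < V₁ < V₂, there exists a unique Ṽ with −(V₁+V₂)/2 < Ṽ < −V₁ satisfying g'(Ṽ) + g'(Ṽ+V₁) + g'(Ṽ+V₁+V₂) = 0, provided g is C^1 and g' is strictly increasing (unbounded above and below). -/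
/-- Existence and uniqueness of the equilibrium point of the double interval: for a
`C¹` even density `g` in volume coordinates, with `g'` strictly increasing and
unbounded above and below, and `0 < V₁ < V₂`, there is a unique `Ṽ` with
`-(V₁+V₂)/2 < Ṽ < -V₁` satisfying `g'(Ṽ) + g'(Ṽ+V₁) + g'(Ṽ+V₁+V₂) = 0`. -/
theorem equilibrium_exists_unique (g : ℝ → ℝ) (hg : ContDiff ℝ 1 g)
    (hg_even : ∀ v, g (-v) = g v) (hg' : StrictMono (deriv g))
    (hg'_top : ∀ c : ℝ, ∃ x, c < deriv g x) (hg'_bot : ∀ c : ℝ, ∃ x, deriv g x < c)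
    (V₁ V₂ : ℝ) (hV₁ : 0 < V₁) (hV₁₂ : V₁ < V₂) :
    ∃! Vt : ℝ, (-(V₁ + V₂) / 2 < Vt ∧ Vt < -V₁) ∧
      deriv g Vt + deriv g (Vt + V₁) + deriv g (Vt + V₁ + V₂) = 0 := by
  have hodd : ∀ x : ℝ, deriv g (-x) = - deriv g x := by
    intro x
    have h : (fun v => g (-v)) = g := funext hg_even
    have h2 := deriv_comp_neg (f := g) (x := x)
    rw [h] at h2
    linarith
  have h0 : deriv g 0 = 0 := by
    have := hodd 0
    simp at this
    linarith
  set F : ℝ → ℝ := fun V => deriv g V + deriv g (V + V₁) + deriv g (V + V₁ + V₂) with hF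
  have hcont : Continuous (deriv g) := hg.continuous_deriv le_rfl
  have hFc : ContinuousOn F (Set.Icc (-(V₁ + V₂) / 2) (-V₁)) := by
    apply Continuous.continuousOn
    fun_prop
  have hFmono : StrictMono F := by
    intro a b hab
    have h1 := hg' hab
    have h2 := hg' (show a + V₁ < b + V₁ by linarith)
    have h3 := hg' (show a + V₁ + V₂ < b + V₁ + V₂ by linarith)
    simp only [hF]
    linarith
  have hlt : -(V₁ + V₂) / 2 < -V₁ := by linarith
  have hFa : F (-(V₁ + V₂) / 2) < 0 := by
    have e1 : -(V₁ + V₂) / 2 + V₁ + V₂ = (V₁ + V₂) / 2 := by ring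
    have e2 : -(V₁ + V₂) / 2 = -((V₁ + V₂) / 2) := by ring
    have h1 : deriv g (-(V₁ + V₂) / 2 + V₁) < deriv g 0 := hg' (by linarith)
    have h2 := hodd ((V₁ + V₂) / 2)
    simp only [hF]
    rw [e1]
    rw [show deriv g (-(V₁ + V₂) / 2) = deriv g (-((V₁ + V₂) / 2)) by rw [← e2]]
    linarith
  have hFb : 0 < F (-V₁) := by
    have e1 : -V₁ + V₁ = (0 : ℝ) := by ring
    have e2 : -V₁ + V₁ + V₂ = V₂ := by ring
    have h1 : deriv g V₁ < deriv g V₂ := hg' hV₁₂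
    have h2 := hodd V₁
    simp only [hF]
    rw [e1, show (0:ℝ) + V₂ = V₂ from zero_add V₂]
    linarith
  obtain ⟨Vt, hVt, hFVt⟩ :=
    intermediate_value_Ioo hlt.le hFc (Set.mem_Ioo.mpr ⟨hFa, hFb⟩)
  refine ⟨Vt, ⟨⟨hVt.1, hVt.2⟩, hFVt⟩, ?_⟩
  intro y hy
  exact hFmono.injective (hy.2.trans hFVt.symm)
end

section
/- Let g be C^1, even, convex with g' strictly increasing, odd, and unbounded. Fix V₁ > 0. Then P₃ − P₂ < 0 for all sufficiently large V₂ ≥ V₁; i.e., the triple interval beats the double interval in equilibrium when V₂ is large. -/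
/-!
Once `g'(Vt + V₁ + V₂)` exceeds `g'(A) + g'(A + V₁)`, the equilibrium condition forces the
other two terms to be very negative, so by oddness and monotonicity of `g'` the middle endpoint
satisfies `Vt + V₁ ≤ -A`. Here `A ≥ 0` is chosen with `g A > 2 g(V₁/2)`, which is possible
because a convex function with a positive slope somewhere tends to infinity. An even convex
function increases with `|x|`, so `g(Vt + V₁) ≥ g A > 2 g(V₁/2)`. Finally, `-Vt` and
`Vt + V₁ + V₂` have midpoint `(V₁ + V₂)/2`, so convexity and evenness give
`g Vt + g(Vt + V₁ + V₂) ≥ 2 g((V₁ + V₂)/2)`.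
-/

open Filter Set

lemma ConvexOn.tendsto_atTop_of_deriv_pos_s8 {f : ℝ → ℝ} (hf : ConvexOn ℝ univ f) {a : ℝ}
    (hfa : DifferentiableAt ℝ f a) (ha : 0 < deriv f a) : Tendsto f atTop atTop := by
  have hline : Tendsto (fun x => f a + deriv f a * (x - a)) atTop atTop :=
    tendsto_atTop_add_const_left _ _
      ((tendsto_atTop_add_const_right _ _ tendsto_id).const_mul_atTop ha)
  refine tendsto_atTop_mono' _ ?_ hline
  filter_upwards [eventually_gt_atTop a] with x hx
  have := hf.deriv_le_slope (mem_univ a) (mem_univ x) hx hfa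
  rw [slope_def_field, le_div_iff₀ (sub_pos.mpr hx)] at this
  linarith

lemma ConvexOn.le_of_abs_le {f : ℝ → ℝ} (hf : ConvexOn ℝ univ f)
    (heven : ∀ x, f (-x) = f x) {x y : ℝ} (hxy : |x| ≤ |y|) : f x ≤ f y := by
  have hseg : x ∈ segment ℝ (-|y|) |y| := by
    rw [segment_eq_Icc (by simp)]
    exact abs_le.mp hxy
  have hfy : f |y| = f y := by
    rcases abs_choice y with h | h <;> rw [h]
    exact heven y
  simpa [heven, hfy] using hf.le_on_segment (mem_univ _) (mem_univ _) hseg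

lemma ConvexOn.two_mul_le_add {f : ℝ → ℝ} (hf : ConvexOn ℝ univ f) (x y : ℝ) :
    2 * f ((x + y) / 2) ≤ f x + f y := by
  have h := hf.2 (mem_univ x) (mem_univ y) (by norm_num : (0:ℝ) ≤ 1 / 2)
    (by norm_num : (0:ℝ) ≤ 1 / 2) (by norm_num)
  simp only [smul_eq_mul] at h
  rw [← mul_add, mul_comm, ← div_eq_mul_one_div] at h
  linarith

lemma StrictMono.add_le_neg_of_sum_eq_zero {f : ℝ → ℝ} (hf : StrictMono f)
    (hodd : ∀ x, f (-x) = -f x) {A a b t x₀ : ℝ} (hx₀ : f A + f (A + a) < f x₀)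
    (hb : x₀ + A ≤ b) (hsum : f t + f (t + a) + f (t + a + b) = 0) : t + a ≤ -A := by
  by_contra! h
  have h₁ : -f (A + a) < f t := hodd (A + a) ▸ hf (by linarith)
  have h₂ : -f A < f (t + a) := hodd A ▸ hf h
  have h₃ : f x₀ < f (t + a + b) := hf (by linarith)
  linarith

theorem triple_better_for_large_V2_general (g : ℝ → ℝ) (hg : ContDiff ℝ 1 g)
    (hg_even : ∀ v, g (-v) = g v) (hg_convex : ConvexOn ℝ Set.univ g)
    (hg' : StrictMono (deriv g)) (hg'_odd : ∀ v, deriv g (-v) = -deriv g v)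
    (hg'_unbdd : ∀ c : ℝ, ∃ x, c < deriv g x)
    (V₁ : ℝ) :
    ∃ V₀ : ℝ, ∀ V₂, V₁ ≤ V₂ → V₀ ≤ V₂ → ∀ Vt : ℝ,
      deriv g Vt + deriv g (Vt + V₁) + deriv g (Vt + V₁ + V₂) = 0 →
      2 * (g (V₁ / 2) + g ((V₁ + V₂) / 2)) <
        g Vt + g (Vt + V₁) + g (Vt + V₁ + V₂) := by
  have hg'0 : deriv g 0 = 0 := by linarith [neg_zero (G := ℝ) ▸ hg'_odd 0]
  have hg'1 : 0 < deriv g 1 := hg'0 ▸ hg' one_pos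
  have hg_atTop := hg_convex.tendsto_atTop_of_deriv_pos_s8 (hg.differentiable one_ne_zero 1) hg'1
  obtain ⟨A, hgA, hA⟩ :=
    ((hg_atTop.eventually_gt_atTop (2 * g (V₁ / 2))).and (eventually_ge_atTop 0)).exists
  obtain ⟨x₀, hx₀⟩ := hg'_unbdd (deriv g A + deriv g (A + V₁))
  refine ⟨x₀ + A, fun V₂ _ hV₂ Vt hVt => ?_⟩
  have hmid : Vt + V₁ ≤ -A := hg'.add_le_neg_of_sum_eq_zero hg'_odd hx₀ hV₂ hVt
  have hgmid : g A ≤ g (Vt + V₁) :=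
    hg_convex.le_of_abs_le hg_even (by rw [abs_of_nonneg hA, abs_of_nonpos (by linarith)]; linarith)
  have houter : 2 * g ((V₁ + V₂) / 2) ≤ g Vt + g (Vt + V₁ + V₂) := by
    rw [← hg_even Vt]
    convert hg_convex.two_mul_le_add (-Vt) (Vt + V₁ + V₂) using 3
    ring
  linarith

/-- Fixed `V₁`, large `V₂`: for a `C¹` even convex density `g` in volume coordinates
with `g'` strictly increasing, odd and unbounded, the triple interval beats the double
interval in equilibrium once `V₂` is sufficiently large. -/
theorem triple_better_for_large_V2 (g : ℝ → ℝ) (hg : ContDiff ℝ 1 g)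
    (hg_even : ∀ v, g (-v) = g v) (hg_convex : ConvexOn ℝ Set.univ g)
    (hg' : StrictMono (deriv g)) (hg'_odd : ∀ v, deriv g (-v) = -deriv g v)
    (hg'_unbdd : ∀ c : ℝ, ∃ x, c < deriv g x)
    (V₁ : ℝ) (hV₁ : 0 < V₁) :
    ∃ V₀ : ℝ, ∀ V₂, V₁ ≤ V₂ → V₀ ≤ V₂ → ∀ Vt : ℝ,
      deriv g Vt + deriv g (Vt + V₁) + deriv g (Vt + V₁ + V₂) = 0 →
      2 * (g (V₁ / 2) + g ((V₁ + V₂) / 2)) <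
        g Vt + g (Vt + V₁) + g (Vt + V₁ + V₂) :=
  triple_better_for_large_V2_general g hg hg_even hg_convex hg' hg'_odd hg'_unbdd V₁
end

section
/- Let g be C^1, even, with g' strictly increasing, odd, and unbounded. Define μ(V₁,V₂) = P₃ − P₂ for 0 < V₁ ≤ V₂. Then for each fixed V₂, μ is strictly increasing in V₁ on (0,V₂], and for each fixed V₁, μ is strictly decreasing in V₂ on [V₁,∞). -/
/-!
As `g'` is strictly increasing, `g` is strictly convex, so `t ↦ P₂ g V₁ V₂ t` is minimised where
its derivative vanishes, at `Ṽ`. Evaluating it at a competitor position and using tangent-line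
bounds for `g` turns `∂μ/∂V₁ = g'(V₁/2) + g'((V₁+V₂)/2) + g'(Ṽ) > 0` and
`∂μ/∂V₂ = g'((V₁+V₂)/2) - g'(Ṽ+V₁+V₂) < 0`, both consequences of `-(V₁+V₂)/2 < Ṽ < -V₁`, into
strict inequalities for steps shorter than a modulus of continuity of `g'`; chaining short steps
gives monotonicity. Near `V₂ = V₁` the margin `Ṽ + (V₁+V₂)/2` degenerates, and the step from the
diagonal is handled by Jensen's inequality around `(V₁+V₂)/2` instead.
-/

open Set

theorem Continuous.exists_pos_forall_abs_add_sub_lt {f : ℝ → ℝ} (hf : Continuous f)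
    (A B : ℝ) {ε : ℝ} (hε : 0 < ε) :
    ∃ δ > 0, ∀ x ∈ Icc A B, ∀ d, |d| < δ → |f (x + d) - f x| < ε := by
  obtain ⟨δ, hδ, hclose⟩ := Metric.uniformContinuousOn_iff.1
    ((isCompact_Icc (a := A - 1) (b := B + 1)).uniformContinuousOn_of_continuous
      hf.continuousOn) ε hε
  refine ⟨min δ 1, lt_min hδ one_pos, fun x hx d hd => ?_⟩
  obtain ⟨hdδ, hd1⟩ := lt_min_iff.1 hd
  obtain ⟨hd₁, hd₂⟩ := abs_lt.1 hd1
  rw [← Real.dist_eq]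
  exact hclose _ ⟨by linarith [hx.1], by linarith [hx.2]⟩ _
    ⟨by linarith [hx.1], by linarith [hx.2]⟩ (by rwa [Real.dist_eq, add_sub_cancel_left])

theorem strictMonoOn_of_forall_sub_lt {β : Type*} [Preorder β] {f : ℝ → β} {s : Set ℝ}
    (hs : s.OrdConnected) {δ : ℝ} (hδ : 0 < δ)
    (hf : ∀ x ∈ s, ∀ y ∈ s, x < y → y - x < δ → f x < f y) : StrictMonoOn f s := by
  intro x hx y hy hxy
  obtain ⟨n, hn⟩ := exists_nat_gt ((y - x) / (δ / 2))
  rw [div_lt_iff₀ (half_pos hδ)] at hn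
  induction n generalizing x with
  | zero => rw [Nat.cast_zero, zero_mul] at hn; linarith
  | succ n ih =>
    by_cases hstep : y - x < δ
    · exact hf x hx y hy hxy hstep
    · have hz : x + δ / 2 ∈ s := hs.out hx hy ⟨by linarith, by linarith⟩
      refine (hf x hx _ hz (by linarith) (by linarith)).trans
        (ih hz (by linarith) ?_)
      push_cast at hn
      linarith

theorem add_mul_deriv_lt_of_strictMono_deriv {g : ℝ → ℝ} (hg : Differentiable ℝ g)
    (hg' : StrictMono (deriv g)) {x y : ℝ} (hxy : x ≠ y) :
    g x + (y - x) * deriv g x < g y := by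
  rcases hxy.lt_or_gt with h | h
  · obtain ⟨c, hc, hslope⟩ :=
      exists_deriv_eq_slope g h hg.continuous.continuousOn hg.differentiableOn
    have := (lt_div_iff₀ (sub_pos.2 h)).1 (hslope ▸ hg' hc.1)
    linarith
  · obtain ⟨c, hc, hslope⟩ :=
      exists_deriv_eq_slope g h hg.continuous.continuousOn hg.differentiableOn
    have := (div_lt_iff₀ (sub_pos.2 h)).1 (hslope ▸ hg' hc.2)
    linarith

theorem add_mul_deriv_le_of_strictMono_deriv {g : ℝ → ℝ} (hg : Differentiable ℝ g)
    (hg' : StrictMono (deriv g)) (x y : ℝ) : g x + (y - x) * deriv g x ≤ g y := by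
  rcases eq_or_ne x y with rfl | hxy
  · simp
  · exact (add_mul_deriv_lt_of_strictMono_deriv hg hg' hxy).le

/-- The paper's `P₂` is `P₂ g V₁ V₂ Ṽ`, where `Ṽ` is the zero of the `t`-derivative
`P₂' g V₁ V₂`. -/
noncomputable def P₂ (g : ℝ → ℝ) (V₁ V₂ t : ℝ) : ℝ := g t + g (t + V₁) + g (t + V₁ + V₂)

noncomputable def P₂' (g : ℝ → ℝ) (V₁ V₂ t : ℝ) : ℝ :=
  deriv g t + deriv g (t + V₁) + deriv g (t + V₁ + V₂)

noncomputable def P₃ (g : ℝ → ℝ) (V₁ V₂ : ℝ) : ℝ := 2 * (g (V₁ / 2) + g ((V₁ + V₂) / 2))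

section Perimeter

variable {g : ℝ → ℝ}

theorem strictMono_P₂' (hg' : StrictMono (deriv g)) (V₁ V₂ : ℝ) : StrictMono (P₂' g V₁ V₂) :=
  fun _ _ hst => add_lt_add (add_lt_add (hg' hst) (hg' (by linarith))) (hg' (by linarith))

theorem P₂_le_of_P₂'_eq_zero (hg : Differentiable ℝ g) (hg' : StrictMono (deriv g))
    {V₁ V₂ v : ℝ} (hv : P₂' g V₁ V₂ v = 0) (t : ℝ) : P₂ g V₁ V₂ v ≤ P₂ g V₁ V₂ t := by
  have h₁ := add_mul_deriv_le_of_strictMono_deriv hg hg' v t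
  have h₂ := add_mul_deriv_le_of_strictMono_deriv hg hg' (v + V₁) (t + V₁)
  have h₃ := add_mul_deriv_le_of_strictMono_deriv hg hg' (v + V₁ + V₂) (t + V₁ + V₂)
  unfold P₂' at hv
  unfold P₂
  linear_combination h₁ + h₂ + h₃ - (t - v) * hv

theorem neg_half_le_of_P₂'_eq_zero (hg' : StrictMono (deriv g)) (hodd : (deriv g).Odd)
    {V₁ V₂ v : ℝ} (h : V₁ ≤ V₂) (hv : P₂' g V₁ V₂ v = 0) : -((V₁ + V₂) / 2) ≤ v := by
  rw [← (strictMono_P₂' hg' V₁ V₂).le_iff_le, hv, ← hodd.map_zero]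
  have : P₂' g V₁ V₂ (-((V₁ + V₂) / 2)) = deriv g ((V₁ - V₂) / 2) := by
    rw [P₂', show -((V₁ + V₂) / 2) + V₁ + V₂ = (V₁ + V₂) / 2 by ring,
      show -((V₁ + V₂) / 2) + V₁ = (V₁ - V₂) / 2 by ring, hodd]
    ring
  exact this ▸ hg'.monotone (by linarith)

theorem lt_neg_of_P₂'_eq_zero (hg' : StrictMono (deriv g)) (hodd : (deriv g).Odd)
    {V₁ V₂ v : ℝ} (h : V₁ < V₂) (hv : P₂' g V₁ V₂ v = 0) : v < -V₁ := by
  rw [← (strictMono_P₂' hg' V₁ V₂).lt_iff_lt, hv, P₂', neg_add_cancel, zero_add, hodd,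
    hodd.map_zero]
  linarith [hg' h]

theorem P₃_sub_P₂_lt_of_lt_left (hg : Differentiable ℝ g) (hg' : StrictMono (deriv g))
    (hodd : (deriv g).Odd) {x y V₂ v w : ℝ} (hxy : x < y) (hxV : x ≤ V₂)
    (hv : P₂' g x V₂ v = 0) (hw : P₂' g y V₂ w = 0)
    (hclose : deriv g ((x + V₂) / 2 + (y - x)) - deriv g ((x + V₂) / 2) < deriv g (x / 2)) :
    P₃ g x V₂ - P₂ g x V₂ v < P₃ g y V₂ - P₂ g y V₂ w := by
  -- shifting `v` by `x - y` keeps the two right boundary points of the `x`-configuration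
  have hmin : P₂ g y V₂ w ≤ g (v - (y - x)) + g (v + x) + g (v + x + V₂) := by
    convert P₂_le_of_P₂'_eq_zero hg hg' hw (v - (y - x)) using 1
    simp only [P₂]
    ring_nf
  have h₁ := add_mul_deriv_le_of_strictMono_deriv hg hg' (v - (y - x)) v
  have h₂ := add_mul_deriv_le_of_strictMono_deriv hg hg' (x / 2) (y / 2)
  have h₃ := add_mul_deriv_le_of_strictMono_deriv hg hg' ((x + V₂) / 2) ((y + V₂) / 2)
  have hlow : -deriv g ((x + V₂) / 2 + (y - x)) ≤ deriv g (v - (y - x)) := by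
    rw [← hodd]
    exact hg'.monotone (by linarith [neg_half_le_of_P₂'_eq_zero hg' hodd hxV hv])
  have hpos : 0 < (y - x) * (deriv g (x / 2) + deriv g ((x + V₂) / 2) + deriv g (v - (y - x))) :=
    mul_pos (by linarith) (by linarith)
  simp only [P₃, P₂] at hmin ⊢
  linear_combination hmin + h₁ + 2 * h₂ + 2 * h₃ + hpos

theorem P₃_sub_P₂_lt_of_lt_right (hg : Differentiable ℝ g) (hg' : StrictMono (deriv g))
    {a p q v w : ℝ} (hpq : p < q) (hv : P₂' g a p v = 0) (hgap : q - p < w + (a + q) / 2) :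
    P₃ g a q - P₂ g a q w < P₃ g a p - P₂ g a p v := by
  have hmin := P₂_le_of_P₂'_eq_zero hg hg' hv w
  have h₁ := add_mul_deriv_le_of_strictMono_deriv hg hg' (w + a + p) (w + a + q)
  have h₂ := add_mul_deriv_le_of_strictMono_deriv hg hg' ((a + q) / 2) ((a + p) / 2)
  have hpos : 0 < (q - p) * (deriv g (w + a + p) - deriv g ((a + q) / 2)) :=
    mul_pos (by linarith) (sub_pos.2 (hg' (by linarith)))
  simp only [P₃, P₂] at hmin ⊢
  linear_combination hmin + h₁ + 2 * h₂ + hpos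

theorem P₃_sub_P₂_lt_of_diagonal (hg : Differentiable ℝ g) (hg' : StrictMono (deriv g))
    (heven : g.Even) (hodd : (deriv g).Odd) {a q v w : ℝ} (haq : a < q)
    (hv : P₂' g a a v = 0) (hw : P₂' g a q w = 0) :
    P₃ g a q - P₂ g a q w < P₃ g a a - P₂ g a a v := by
  have hmin : P₂ g a a v ≤ 2 * g a + g 0 := by
    convert P₂_le_of_P₂'_eq_zero hg hg' hv (-a) using 1
    rw [P₂, neg_add_cancel, zero_add, heven]
    ring
  have h₁ := add_mul_deriv_le_of_strictMono_deriv hg hg' ((a + q) / 2) (w + a + q)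
  have h₂ := add_mul_deriv_le_of_strictMono_deriv hg hg' ((a + q) / 2) (-w)
  have h₃ := add_mul_deriv_lt_of_strictMono_deriv hg hg' (x := 0) (y := w + a)
    (by linarith [lt_neg_of_P₂'_eq_zero hg' hodd haq hw])
  rw [heven] at h₂
  rw [hodd.map_zero] at h₃
  simp only [P₃, P₂] at hmin ⊢
  rw [add_self_div_two]
  linear_combination hmin + h₁ + h₂ + h₃

theorem exists_pos_lt_add_half_of_P₂'_eq_zero (hg' : StrictMono (deriv g))
    (hodd : (deriv g).Odd) (hc : Continuous (deriv g)) {a p : ℝ} (hap : a < p) (Q : ℝ) :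
    ∃ δ > 0, ∀ q ∈ Icc p Q, ∀ w, P₂' g a q w = 0 → δ < w + (a + q) / 2 := by
  have hε : 0 < -deriv g ((a - p) / 4) := by
    rw [neg_pos, ← hodd.map_zero]
    exact hg' (by linarith)
  obtain ⟨δ₀, hδ₀, hclose⟩ := hc.exists_pos_forall_abs_add_sub_lt ((a + p) / 2) ((a + Q) / 2)
    (half_pos hε)
  set δ := min (δ₀ / 2) ((p - a) / 4)
  have hδ : 0 < δ := lt_min (half_pos hδ₀) (by linarith)
  have hδδ₀ : |δ| < δ₀ := by
    rw [abs_of_pos hδ]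
    exact (min_le_left _ _).trans_lt (half_lt_self hδ₀)
  refine ⟨δ, hδ, fun q hq w hw => ?_⟩
  have hm : (a + q) / 2 ∈ Icc ((a + p) / 2) ((a + Q) / 2) :=
    ⟨by linarith [hq.1], by linarith [hq.2]⟩
  have h₁ := (abs_lt.1 (hclose _ hm δ hδδ₀)).2
  have h₂ := (abs_lt.1 (hclose _ hm (-δ) (by rwa [abs_neg]))).1
  have h₃ : deriv g (δ + (a - q) / 2) ≤ deriv g ((a - p) / 4) :=
    hg'.monotone (by linarith [min_le_right (δ₀ / 2) ((p - a) / 4), hq.1])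
  have hneg : P₂' g a q (δ - (a + q) / 2) < 0 := by
    rw [P₂', show δ - (a + q) / 2 = -((a + q) / 2 + -δ) by ring, hodd,
      show -((a + q) / 2 + -δ) + a = δ + (a - q) / 2 by ring,
      show δ + (a - q) / 2 + q = (a + q) / 2 + δ by ring]
    linarith
  have := (strictMono_P₂' hg' a q).lt_iff_lt.1 (hneg.trans_eq hw.symm)
  linarith

end Perimeter

theorem mu_monotone_general (g : ℝ → ℝ) (hg : ContDiff ℝ 1 g)
    (hg_even : ∀ v, g (-v) = g v) (hg' : StrictMono (deriv g))
    (hg'_odd : ∀ v, deriv g (-v) = -deriv g v)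
    (Vt : ℝ → ℝ → ℝ)
    (hVt : ∀ V₁ V₂, 0 < V₁ → V₁ ≤ V₂ →
      deriv g (Vt V₁ V₂) + deriv g (Vt V₁ V₂ + V₁) + deriv g (Vt V₁ V₂ + V₁ + V₂) = 0)
    (μ : ℝ → ℝ → ℝ)
    (hμ : ∀ V₁ V₂, μ V₁ V₂ = 2 * (g (V₁ / 2) + g ((V₁ + V₂) / 2)) -
      (g (Vt V₁ V₂) + g (Vt V₁ V₂ + V₁) + g (Vt V₁ V₂ + V₁ + V₂))) :
    (∀ V₂ > 0, StrictMonoOn (fun V₁ => μ V₁ V₂) (Set.Ioc 0 V₂)) ∧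
      (∀ V₁ > 0, StrictAntiOn (fun V₂ => μ V₁ V₂) (Set.Ici V₁)) := by
  have hd : Differentiable ℝ g := hg.differentiable one_ne_zero
  have hc : Continuous (deriv g) := hg.continuous_deriv le_rfl
  have hμ' : ∀ V₁ V₂, μ V₁ V₂ = P₃ g V₁ V₂ - P₂ g V₁ V₂ (Vt V₁ V₂) := hμ
  refine ⟨fun V₂ _ x hx y hy hxy => ?_, fun V₁ hV₁ p hp q hq hpq => ?_⟩
  · obtain ⟨δ, hδ, hclose⟩ := hc.exists_pos_forall_abs_add_sub_lt 0 V₂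
      (Function.Odd.map_zero hg'_odd ▸ hg' (half_pos hx.1))
    refine strictMonoOn_of_forall_sub_lt (f := fun V₁ => μ V₁ V₂) ordConnected_Icc hδ
      (fun x₁ h₁ x₂ h₂ h₁₂ hx₁₂ => ?_) ⟨le_rfl, hx.2⟩ ⟨hxy.le, hy.2⟩ hxy
    have hx₁ : 0 < x₁ := hx.1.trans_le h₁.1
    have hmod := (abs_lt.1 (hclose ((x₁ + V₂) / 2) ⟨by linarith, by linarith [h₁.2]⟩ (x₂ - x₁)
      (by rwa [abs_of_pos (sub_pos.2 h₁₂)]))).2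
    change μ x₁ V₂ < μ x₂ V₂
    rw [hμ', hμ']
    exact P₃_sub_P₂_lt_of_lt_left hd hg' hg'_odd h₁₂ h₁.2 (hVt _ _ hx₁ h₁.2)
      (hVt _ _ (hx₁.trans h₁₂) h₂.2)
      (by linarith [hg'.monotone (div_le_div_of_nonneg_right h₁.1 zero_le_two)])
  · rcases (mem_Ici.1 hp).eq_or_lt with rfl | hV₁p
    · simp only [hμ']
      exact P₃_sub_P₂_lt_of_diagonal hd hg' hg_even hg'_odd hpq (hVt _ _ hV₁ le_rfl)
        (hVt _ _ hV₁ hpq.le)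
    obtain ⟨δ, hδ, hgap⟩ := exists_pos_lt_add_half_of_P₂'_eq_zero hg' hg'_odd hc hV₁p q
    refine strictMonoOn_of_forall_sub_lt (f := fun V₂ => OrderDual.toDual (μ V₁ V₂))
      ordConnected_Icc hδ (fun p₁ h₁ p₂ h₂ h₁₂ hp₁₂ => ?_) ⟨le_rfl, hpq.le⟩ ⟨hpq.le, le_rfl⟩ hpq
    have hV₁p₁ : V₁ ≤ p₁ := hV₁p.le.trans h₁.1
    change μ V₁ p₂ < μ V₁ p₁
    rw [hμ', hμ']
    exact P₃_sub_P₂_lt_of_lt_right hd hg' h₁₂ (hVt _ _ hV₁ hV₁p₁)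
      (by linarith [hgap p₂ h₂ _ (hVt _ _ hV₁ (hV₁p₁.trans h₁₂.le))])

/-- Monotonicity of the perimeter difference `μ = P₃ - P₂`: with `g` the density in
volume coordinates (`C¹`, even, `g'` strictly increasing, odd, unbounded) and
`Vt V₁ V₂` the equilibrium point of the double interval, `μ` is strictly increasing in
`V₁` for fixed `V₂` and strictly decreasing in `V₂` for fixed `V₁`. -/
theorem mu_monotone (g : ℝ → ℝ) (hg : ContDiff ℝ 1 g)
    (hg_even : ∀ v, g (-v) = g v) (hg' : StrictMono (deriv g))
    (hg'_odd : ∀ v, deriv g (-v) = -deriv g v)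
    (hg'_unbdd : ∀ c : ℝ, ∃ x, c < deriv g x)
    (Vt : ℝ → ℝ → ℝ)
    (hVt : ∀ V₁ V₂, 0 < V₁ → V₁ ≤ V₂ →
      deriv g (Vt V₁ V₂) + deriv g (Vt V₁ V₂ + V₁) + deriv g (Vt V₁ V₂ + V₁ + V₂) = 0)
    (μ : ℝ → ℝ → ℝ)
    (hμ : ∀ V₁ V₂, μ V₁ V₂ = 2 * (g (V₁ / 2) + g ((V₁ + V₂) / 2)) -
      (g (Vt V₁ V₂) + g (Vt V₁ V₂ + V₁) + g (Vt V₁ V₂ + V₁ + V₂))) :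
    (∀ V₂ > 0, StrictMonoOn (fun V₁ => μ V₁ V₂) (Set.Ioc 0 V₂)) ∧
      (∀ V₁ > 0, StrictAntiOn (fun V₂ => μ V₁ V₂) (Set.Ici V₁)) :=
  mu_monotone_general g hg hg_even hg' hg'_odd Vt hVt μ hμ
end

section
/- Consider the density g(V) = |V| + e^{−|V|} in volume coordinates (which is C^1, even, strictly convex, with bounded derivative). For every fixed V₁ > 0, as V₂ → ∞ the equilibrium point Ṽ converges to −log(1+e^{V₁}), and the limit of μ = P₃ − P₂ equals 2V₁ − log(1+e^{V₁}) + 2e^{−V₁/2} − 1, which is strictly positive for all V₁ > 0; hence μ > 0 for all V₁ ≤ V₂ and the double interval is always better. -/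
/-!
The derivative `g'(v) = sign v · (1 - e^{-|v|})` is strictly increasing, so the equilibrium
`Ṽ` is unique. For `V₁ ≤ V₂` it lies where `Ṽ ≤ Ṽ + V₁ ≤ 0 < Ṽ + V₁ + V₂`; there `t = e^Ṽ`
solves `(1 + e^{V₁}) t² = t + e^{-(V₁ + V₂)}`, whose positive root lies between
`e^{-(V₁ + V₂)/2}` and `e^{-V₁}` and tends to `1 / (1 + e^{V₁})`. Substituting,
`μ = L + (Ṽ + log (1 + e^{V₁})) + 2 e^{-(V₁ + V₂)/2} - 2 e^{-(Ṽ + V₁ + V₂)}`, where `L` is the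
claimed limit: the middle term is `≥ 0` since `t ≥ 1 / (1 + e^{V₁})`, the last two since
`Ṽ ≥ -(V₁ + V₂)/2`, and both tend to `0`. Finally `L ≥ 1 - log 2 > 0`, from
`log (1 + e^{V₁}) ≤ V₁ + log 2` and `e^{-V₁/2} ≥ 1 - V₁/2`.
-/

open Filter Real Set Topology

noncomputable section

section Density

def density (v : ℝ) : ℝ := |v| + exp (-|v|)

def densityDeriv (v : ℝ) : ℝ := if v ≤ 0 then exp v - 1 else 1 - exp (-v)

variable {v : ℝ}

lemma density_of_nonpos (hv : v ≤ 0) : density v = exp v - v := by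
  rw [density, abs_of_nonpos hv, neg_neg]; ring

lemma density_of_nonneg (hv : 0 ≤ v) : density v = v + exp (-v) := by
  rw [density, abs_of_nonneg hv]

lemma densityDeriv_of_nonpos (hv : v ≤ 0) : densityDeriv v = exp v - 1 := if_pos hv

lemma densityDeriv_of_nonneg (hv : 0 ≤ v) : densityDeriv v = 1 - exp (-v) := by
  rcases hv.eq_or_lt with rfl | hv
  · simp [densityDeriv]
  · exact if_neg hv.not_ge

lemma strictMono_densityDeriv : StrictMono densityDeriv := by
  refine StrictMonoOn.Iic_union_Ici (a := 0) (fun x hx y hy hxy => ?_) (fun x hx y hy hxy => ?_)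
  · rw [densityDeriv_of_nonpos hx, densityDeriv_of_nonpos hy]
    gcongr
  · rw [densityDeriv_of_nonneg hx, densityDeriv_of_nonneg hy]
    gcongr

lemma hasDerivWithinAt_density_Iic (hv : v ≤ 0) :
    HasDerivWithinAt density (densityDeriv v) (Iic 0) v := by
  rw [densityDeriv_of_nonpos hv]
  exact ((hasDerivAt_exp v).sub (hasDerivAt_id v)).hasDerivWithinAt.congr
    (fun _ hy => density_of_nonpos hy) (density_of_nonpos hv)

lemma hasDerivWithinAt_density_Ici (hv : 0 ≤ v) :
    HasDerivWithinAt density (densityDeriv v) (Ici 0) v := by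
  rw [densityDeriv_of_nonneg hv]
  exact (((hasDerivAt_id v).add (hasDerivAt_neg v).exp).hasDerivWithinAt.congr
    (fun _ hy => density_of_nonneg hy) (density_of_nonneg hv)).congr_deriv (by ring)

lemma hasDerivAt_density (v : ℝ) : HasDerivAt density (densityDeriv v) v := by
  rcases lt_trichotomy v 0 with hv | rfl | hv
  · exact (hasDerivWithinAt_density_Iic hv.le).hasDerivAt (Iic_mem_nhds hv)
  · simpa [Iic_union_Ici] using
      (hasDerivWithinAt_density_Iic le_rfl).union (hasDerivWithinAt_density_Ici le_rfl)
  · exact (hasDerivWithinAt_density_Ici hv.le).hasDerivAt (Ici_mem_nhds hv)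

lemma deriv_density : deriv density = densityDeriv :=
  funext fun v => (hasDerivAt_density v).deriv

end Density

section PosRoot

variable {a e d : ℝ}

def posRoot (a e : ℝ) : ℝ := (1 + √(1 + 4 * a * e)) / (2 * a)

lemma posRoot_zero (a : ℝ) : posRoot a 0 = a⁻¹ := by
  rw [posRoot, mul_zero, add_zero, sqrt_one]; ring

lemma continuous_posRoot (a : ℝ) : Continuous (posRoot a) := by
  unfold posRoot; fun_prop

lemma mul_posRoot_sq (ha : 0 < a) (he : 0 ≤ e) : a * posRoot a e ^ 2 = posRoot a e + e := by
  have hs : √(1 + 4 * a * e) ^ 2 = 1 + 4 * a * e := sq_sqrt (by positivity)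
  rw [posRoot]
  generalize √(1 + 4 * a * e) = s at hs
  field_simp
  linear_combination hs

lemma inv_le_posRoot (ha : 0 < a) (he : 0 ≤ e) : a⁻¹ ≤ posRoot a e := by
  have hs : 1 ≤ √(1 + 4 * a * e) := one_le_sqrt.2 (by nlinarith)
  rw [posRoot, inv_eq_one_div, div_le_div_iff₀ ha (by positivity)]
  nlinarith

lemma posRoot_pos (ha : 0 < a) (he : 0 ≤ e) : 0 < posRoot a e :=
  (inv_pos.2 ha).trans_le (inv_le_posRoot ha he)

lemma one_le_mul_posRoot (ha : 0 < a) (he : 0 ≤ e) : 1 ≤ a * posRoot a e := by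
  simpa [ha.ne'] using mul_le_mul_of_nonneg_left (inv_le_posRoot ha he) ha.le

/- For `r = posRoot a e` and `d > 0`, `(a d² - d) - e = (d - r) (a (d + r) - 1)` with
`a (d + r) - 1 > 0`, which gives both comparisons below. -/

lemma le_posRoot_iff (ha : 0 < a) (he : 0 ≤ e) (hd : 0 < d) :
    d ≤ posRoot a e ↔ a * d ^ 2 ≤ d + e := by
  have hr := mul_posRoot_sq ha he
  have har := one_le_mul_posRoot ha he
  constructor <;> intro h <;> nlinarith [mul_pos ha hd, posRoot_pos ha he]

lemma posRoot_le_iff (ha : 0 < a) (he : 0 ≤ e) (hd : 0 < d) :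
    posRoot a e ≤ d ↔ d + e ≤ a * d ^ 2 := by
  have hr := mul_posRoot_sq ha he
  have har := one_le_mul_posRoot ha he
  constructor <;> intro h <;> nlinarith [mul_pos ha hd, posRoot_pos ha he]

end PosRoot

section Equilibrium

variable {V₁ V₂ : ℝ}

/-- The equilibrium equation, on the region `Ṽ ≤ Ṽ + V₁ ≤ 0 < Ṽ + V₁ + V₂` where it will be
shown to hold, reads `(1 + e^{V₁}) t - 1 - e^{-(V₁ + V₂)} / t = 0` for `t = e^Ṽ`. -/
def expEquilibrium (V₁ V₂ : ℝ) : ℝ := posRoot (1 + exp V₁) (exp (-(V₁ + V₂)))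

def equilibrium (V₁ V₂ : ℝ) : ℝ := log (expEquilibrium V₁ V₂)

lemma expEquilibrium_pos : 0 < expEquilibrium V₁ V₂ :=
  posRoot_pos (by positivity) (exp_nonneg _)

lemma exp_equilibrium : exp (equilibrium V₁ V₂) = expEquilibrium V₁ V₂ :=
  exp_log expEquilibrium_pos

lemma exp_equilibrium_add : exp (equilibrium V₁ V₂ + V₁) = expEquilibrium V₁ V₂ * exp V₁ := by
  rw [exp_add, exp_equilibrium]

lemma mul_expEquilibrium_sq :
    (1 + exp V₁) * expEquilibrium V₁ V₂ ^ 2 = expEquilibrium V₁ V₂ + exp (-(V₁ + V₂)) :=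
  mul_posRoot_sq (by positivity) (exp_nonneg _)

lemma exp_neg_equilibrium_add_add :
    exp (-(equilibrium V₁ V₂ + V₁ + V₂)) = (1 + exp V₁) * expEquilibrium V₁ V₂ - 1 := by
  have hquad := mul_expEquilibrium_sq (V₁ := V₁) (V₂ := V₂)
  have ht := (expEquilibrium_pos (V₁ := V₁) (V₂ := V₂)).ne'
  rw [show -(equilibrium V₁ V₂ + V₁ + V₂) = -(V₁ + V₂) - equilibrium V₁ V₂ by ring, exp_sub,
    exp_equilibrium]
  field_simp
  linear_combination -hquad

lemma expEquilibrium_le (h : V₁ ≤ V₂) : expEquilibrium V₁ V₂ ≤ exp (-V₁) := by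
  refine (posRoot_le_iff (by positivity) (exp_nonneg _) (exp_pos _)).2 ?_
  have h1 : exp V₁ * exp (-V₁) = 1 := by rw [← exp_add]; simp
  have h2 : exp (-(V₁ + V₂)) ≤ exp (-V₁) * exp (-V₁) := by
    rw [← exp_add]; gcongr; linarith
  linear_combination h2 - exp (-V₁) * h1

lemma exp_neg_half_le_expEquilibrium (h : V₁ ≤ V₂) :
    exp (-((V₁ + V₂) / 2)) ≤ expEquilibrium V₁ V₂ := by
  refine (le_posRoot_iff (by positivity) (exp_nonneg _) (exp_pos _)).2 ?_
  have h1 : exp (-((V₁ + V₂) / 2)) ^ 2 = exp (-(V₁ + V₂)) := by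
    rw [← exp_nat_mul]; ring_nf
  have h2 : exp V₁ * exp (-(V₁ + V₂)) ≤ exp (-((V₁ + V₂) / 2)) := by
    rw [← exp_add]; gcongr; linarith
  linear_combination h2 + (1 + exp V₁) * h1

lemma equilibrium_add_nonpos (h : V₁ ≤ V₂) : equilibrium V₁ V₂ + V₁ ≤ 0 := by
  have := (log_le_iff_le_exp expEquilibrium_pos).2 (expEquilibrium_le h)
  rw [equilibrium]; linarith

lemma neg_half_le_equilibrium (h : V₁ ≤ V₂) : -((V₁ + V₂) / 2) ≤ equilibrium V₁ V₂ :=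
  (le_log_iff_exp_le expEquilibrium_pos).2 (exp_neg_half_le_expEquilibrium h)

lemma densityDeriv_sum_equilibrium (hV₁ : 0 < V₁) (h : V₁ ≤ V₂) :
    densityDeriv (equilibrium V₁ V₂) + densityDeriv (equilibrium V₁ V₂ + V₁) +
      densityDeriv (equilibrium V₁ V₂ + V₁ + V₂) = 0 := by
  have hx := equilibrium_add_nonpos h
  have hx' := neg_half_le_equilibrium h
  rw [densityDeriv_of_nonpos (by linarith), densityDeriv_of_nonpos hx,
    densityDeriv_of_nonneg (by linarith), exp_equilibrium, exp_equilibrium_add,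
    exp_neg_equilibrium_add_add]
  ring

lemma eq_equilibrium_of_deriv_sum_eq_zero (hV₁ : 0 < V₁) (h : V₁ ≤ V₂) {x : ℝ}
    (hx : deriv density x + deriv density (x + V₁) + deriv density (x + V₁ + V₂) = 0) :
    x = equilibrium V₁ V₂ := by
  have hmono : StrictMono fun y => densityDeriv y + densityDeriv (y + V₁) +
      densityDeriv (y + V₁ + V₂) := fun y y' hy => by
    have h₁ : y + V₁ < y' + V₁ := by linarith
    have h₂ : y + V₁ + V₂ < y' + V₁ + V₂ := by linarith
    dsimp only
    linarith [strictMono_densityDeriv hy, strictMono_densityDeriv h₁, strictMono_densityDeriv h₂]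
  rw [deriv_density] at hx
  exact hmono.injective (hx.trans (densityDeriv_sum_equilibrium hV₁ h).symm)

end Equilibrium

section PerimeterGap

variable {V₁ V₂ : ℝ}

def gapLimit (V₁ : ℝ) : ℝ := 2 * V₁ - log (1 + exp V₁) + 2 * exp (-V₁ / 2) - 1

def perimeterGap (V₁ V₂ : ℝ) : ℝ :=
  2 * (density (V₁ / 2) + density ((V₁ + V₂) / 2)) -
    (density (equilibrium V₁ V₂) + density (equilibrium V₁ V₂ + V₁) +
      density (equilibrium V₁ V₂ + V₁ + V₂))

lemma gapLimit_pos (hV₁ : 0 ≤ V₁) : 0 < gapLimit V₁ := by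
  have h1 : log (1 + exp V₁) ≤ log 2 + V₁ := by
    rw [← log_exp V₁, ← log_mul two_ne_zero (exp_pos _).ne', log_exp]
    exact log_le_log (by positivity) (by linarith [one_le_exp hV₁])
  have h2 : 1 - V₁ / 2 ≤ exp (-V₁ / 2) := by
    linarith [add_one_le_exp (-V₁ / 2)]
  have h3 := log_two_lt_d9
  rw [gapLimit]; linarith

lemma perimeterGap_eq (hV₁ : 0 < V₁) (h : V₁ ≤ V₂) :
    perimeterGap V₁ V₂ = gapLimit V₁ + (equilibrium V₁ V₂ + log (1 + exp V₁)) +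
      2 * exp (-((V₁ + V₂) / 2)) - 2 * ((1 + exp V₁) * expEquilibrium V₁ V₂ - 1) := by
  have hx := equilibrium_add_nonpos h
  have hx' := neg_half_le_equilibrium h
  rw [perimeterGap, gapLimit, density_of_nonneg (by linarith : 0 ≤ V₁ / 2),
    density_of_nonneg (by linarith : 0 ≤ (V₁ + V₂) / 2), density_of_nonpos (by linarith),
    density_of_nonpos hx, density_of_nonneg (by linarith), exp_equilibrium, exp_equilibrium_add,
    exp_neg_equilibrium_add_add, neg_div]
  ring

lemma perimeterGap_pos (hV₁ : 0 < V₁) (h : V₁ ≤ V₂) : 0 < perimeterGap V₁ V₂ := by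
  have h1 : -log (1 + exp V₁) ≤ equilibrium V₁ V₂ := by
    rw [← log_inv]
    exact log_le_log (by positivity) (inv_le_posRoot (by positivity) (exp_nonneg _))
  have h2 : (1 + exp V₁) * expEquilibrium V₁ V₂ - 1 ≤ exp (-((V₁ + V₂) / 2)) := by
    rw [← exp_neg_equilibrium_add_add]
    gcongr
    linarith [neg_half_le_equilibrium h]
  rw [perimeterGap_eq hV₁ h]
  linarith [gapLimit_pos hV₁.le]

lemma tendsto_expEquilibrium (V₁ : ℝ) :
    Tendsto (expEquilibrium V₁) atTop (𝓝 (1 + exp V₁)⁻¹) := by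
  have hε : Tendsto (fun V₂ => exp (-(V₁ + V₂))) atTop (𝓝 0) :=
    tendsto_exp_atBot.comp
      (tendsto_neg_atTop_atBot.comp (tendsto_atTop_add_const_left _ _ tendsto_id))
  have := ((continuous_posRoot (1 + exp V₁)).tendsto 0).comp hε
  rwa [posRoot_zero] at this

lemma tendsto_equilibrium (V₁ : ℝ) :
    Tendsto (equilibrium V₁) atTop (𝓝 (-log (1 + exp V₁))) := by
  have := (tendsto_expEquilibrium V₁).log (by positivity)
  rwa [log_inv] at this

lemma tendsto_perimeterGap (hV₁ : 0 < V₁) :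
    Tendsto (perimeterGap V₁) atTop (𝓝 (gapLimit V₁)) := by
  have hδ : Tendsto (fun V₂ => exp (-((V₁ + V₂) / 2))) atTop (𝓝 0) :=
    tendsto_exp_atBot.comp (tendsto_neg_atTop_atBot.comp
      ((tendsto_atTop_add_const_left _ _ tendsto_id).atTop_div_const two_pos))
  have hlim := ((tendsto_const_nhds (x := gapLimit V₁)).add
    ((tendsto_equilibrium V₁).add_const (log (1 + exp V₁)))).add (hδ.const_mul 2) |>.sub
    ((((tendsto_expEquilibrium V₁).const_mul (1 + exp V₁)).sub_const 1).const_mul 2)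
  rw [neg_add_cancel, mul_inv_cancel₀ (by positivity), sub_self] at hlim
  simp only [mul_zero, add_zero, sub_zero] at hlim
  refine hlim.congr' ?_
  filter_upwards [eventually_ge_atTop V₁] with V₂ h
  exact (perimeterGap_eq hV₁ h).symm

end PerimeterGap

/-- The density `g(V) = |V| + e^{-|V|}` in volume coordinates (strictly convex with
bounded derivative): for fixed `V₁ > 0`, as `V₂ → ∞` the equilibrium point `Ṽ`
converges to `-log(1+e^{V₁})`, the perimeter difference `μ = P₃ - P₂` converges to
`2V₁ - log(1+e^{V₁}) + 2e^{-V₁/2} - 1 > 0`, and `μ > 0` for all `V₂ ≥ V₁`; so the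
double interval is always better. -/
theorem bounded_derivative_example
    (g : ℝ → ℝ) (hg : ∀ v, g v = |v| + Real.exp (-|v|))
    (V₁ : ℝ) (hV₁ : 0 < V₁)
    (Vt : ℝ → ℝ)
    (hVt : ∀ V₂, V₁ ≤ V₂ →
      deriv g (Vt V₂) + deriv g (Vt V₂ + V₁) + deriv g (Vt V₂ + V₁ + V₂) = 0)
    (μ : ℝ → ℝ)
    (hμ : ∀ V₂, μ V₂ = 2 * (g (V₁ / 2) + g ((V₁ + V₂) / 2)) -
      (g (Vt V₂) + g (Vt V₂ + V₁) + g (Vt V₂ + V₁ + V₂))) :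
    Tendsto Vt atTop (nhds (-Real.log (1 + Real.exp V₁))) ∧
    Tendsto μ atTop
      (nhds (2 * V₁ - Real.log (1 + Real.exp V₁) + 2 * Real.exp (-V₁ / 2) - 1)) ∧
    0 < 2 * V₁ - Real.log (1 + Real.exp V₁) + 2 * Real.exp (-V₁ / 2) - 1 ∧
    ∀ V₂, V₁ ≤ V₂ → 0 < μ V₂ := by
  obtain rfl : g = density := funext hg
  have hVt_eq : ∀ V₂, V₁ ≤ V₂ → Vt V₂ = equilibrium V₁ V₂ := fun V₂ h =>
    eq_equilibrium_of_deriv_sum_eq_zero hV₁ h (hVt V₂ h)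
  have hμ_eq : ∀ V₂, V₁ ≤ V₂ → μ V₂ = perimeterGap V₁ V₂ := fun V₂ h => by
    rw [hμ, hVt_eq V₂ h, perimeterGap]
  refine ⟨(tendsto_equilibrium V₁).congr' ?_, (tendsto_perimeterGap hV₁).congr' ?_,
    gapLimit_pos hV₁.le, fun V₂ h => hμ_eq V₂ h ▸ perimeterGap_pos hV₁ h⟩ <;>
  filter_upwards [eventually_ge_atTop V₁] with V₂ h
  exacts [(hVt_eq V₂ h).symm, (hμ_eq V₂ h).symm]
end
end

section
/- The function h(V₁) = 2V₁ − log(1+e^{V₁}) + 2e^{−V₁/2} − 1 is strictly positive for all V₁ > 0. -/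
/-- The function `h(V₁) = 2V₁ - log(1+e^{V₁}) + 2e^{-V₁/2} - 1` is strictly positive
for all `V₁ > 0`. -/
theorem limiting_difference_positive (V₁ : ℝ) (hV₁ : 0 < V₁) :
    0 < 2 * V₁ - Real.log (1 + Real.exp V₁) + 2 * Real.exp (-V₁ / 2) - 1 := by
  have h1 : Real.log (1 + Real.exp V₁) ≤ V₁ + Real.log 2 := by
    have hle : (1:ℝ) + Real.exp V₁ ≤ 2 * Real.exp V₁ := by
      nlinarith [Real.one_le_exp hV₁.le]
    calc Real.log (1 + Real.exp V₁) ≤ Real.log (2 * Real.exp V₁) :=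
          Real.log_le_log (by positivity) hle
      _ = V₁ + Real.log 2 := by
          rw [Real.log_mul two_ne_zero (Real.exp_ne_zero _), Real.log_exp]; ring
  have h2 : 1 - V₁ / 2 ≤ Real.exp (-V₁ / 2) := by
    have := Real.add_one_le_exp (-V₁ / 2); linarith
  have h3 : Real.log 2 < 1 := by
    have := Real.log_two_lt_d9; linarith
  linarith
end

section
/- Let g be C^2, even, convex, with g' strictly increasing, odd, and unbounded, and suppose V·g''(V) is bounded on (0,∞). Let λ(V₁) be the unique tie point for the double bubble problem. Then λ(V₁)/V₁ → ∞ as V₁ → ∞. -/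
/-!
Write `V₂ = λ(V₁)` and let `t` be the tie point, so that the values of `g'` at `t`, `t + V₁`,
`t + V₁ + V₂` sum to zero. Oddness and monotonicity of `g'` force `t + V₁ ≤ 0 ≤ 2t + V₁ + V₂`,
hence `-g'(t + V₁) = g'(t + V₁ + V₂) - g'(-t) ≤ C log(V₂/V₁)` from `v g''(v) ≤ C`. The
tangent-line inequalities at the three points, combined with `μ = 0`, then give
`V₁ g'(V₁/4) ≤ -2 g(0) + C V₂ log(V₂/V₁) ≤ -2 g(0) + C V₁ (V₂/V₁)²`, and `g'` is unbounded.
-/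

open Filter Set Real

lemma ConvexOn.add_deriv_mul_sub_le {S : Set ℝ} {f : ℝ → ℝ} (hf : ConvexOn ℝ S f) {x y : ℝ}
    (hx : x ∈ S) (hy : y ∈ S) (hfx : DifferentiableAt ℝ f x) :
    f x + deriv f x * (y - x) ≤ f y := by
  rcases lt_trichotomy x y with hxy | rfl | hxy
  · have h := hf.deriv_le_slope hx hy hxy hfx
    rw [slope_def_field, le_div_iff₀ (sub_pos.2 hxy)] at h
    linarith
  · simp
  · have h := hf.slope_le_deriv hy hx hxy hfx
    rw [slope_def_field, div_le_iff₀ (sub_pos.2 hxy)] at h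
    linarith

lemma sub_le_mul_log_div_of_mul_deriv_le {φ : ℝ → ℝ} (hφ : DifferentiableOn ℝ φ (Ioi 0))
    {C : ℝ} (hC : ∀ v > 0, v * deriv φ v ≤ C) {x y : ℝ} (hy : 0 < y) (hyx : y ≤ x) :
    φ x - φ y ≤ C * log (x / y) := by
  have hdiff (u : ℝ) : DifferentiableAt ℝ φ (exp u) :=
    hφ.differentiableAt (Ioi_mem_nhds (exp_pos u))
  have hcomp : Differentiable ℝ (φ ∘ exp) := fun u => (hdiff u).comp u differentiableAt_exp
  have hderiv (u : ℝ) : deriv (φ ∘ exp) u ≤ C := by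
    rw [deriv_comp u (hdiff u) differentiableAt_exp, Real.deriv_exp, mul_comm]
    exact hC _ (exp_pos u)
  have h := image_sub_le_mul_sub_of_deriv_le hcomp hderiv (log_le_log hy hyx)
  simp only [Function.comp_apply, exp_log hy, exp_log (hy.trans_le hyx)] at h
  rwa [log_div (hy.trans_le hyx).ne' hy.ne']

section TiePoint

variable {φ : ℝ → ℝ} {t V₁ V₂ : ℝ}

lemma tie_middle_nonpos (hφ : StrictMono φ) (hodd : φ.Odd) (hV : V₁ ≤ V₂)
    (htie : φ t + φ (t + V₁) + φ (t + V₁ + V₂) = 0) : t + V₁ ≤ 0 := by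
  by_contra! h
  have hout : φ (-t) < φ (t + V₁ + V₂) := hφ (by linarith)
  have hmid : φ 0 < φ (t + V₁) := hφ h
  rw [hodd] at hout
  rw [hodd.map_zero] at hmid
  linarith

lemma tie_neg_left_le_right (hφ : StrictMono φ) (hodd : φ.Odd) (hV : V₁ ≤ V₂)
    (htie : φ t + φ (t + V₁) + φ (t + V₁ + V₂) = 0) : -t ≤ t + V₁ + V₂ := by
  by_contra! h
  have hout : φ (t + V₁ + V₂) < φ (-t) := hφ h
  have hmid : φ (t + V₁) < φ 0 := hφ (by linarith)
  rw [hodd] at hout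
  rw [hodd.map_zero] at hmid
  linarith

lemma neg_tie_middle_le_mul_log (hφ : StrictMono φ) (hodd : φ.Odd)
    (hφd : DifferentiableOn ℝ φ (Ioi 0)) {C : ℝ} (hC0 : 0 ≤ C)
    (hC : ∀ v > 0, v * deriv φ v ≤ C) (hV₁ : 0 < V₁) (hV : V₁ ≤ V₂)
    (htie : φ t + φ (t + V₁) + φ (t + V₁ + V₂) = 0) :
    -φ (t + V₁) ≤ C * log (V₂ / V₁) := by
  have hmid := tie_middle_nonpos hφ hodd hV htie
  have hout := tie_neg_left_le_right hφ hodd hV htie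
  have hinc := sub_le_mul_log_div_of_mul_deriv_le hφd hC (by linarith) hout
  have hratio : (t + V₁ + V₂) / -t ≤ V₂ / V₁ :=
    div_le_div₀ (by linarith) (by linarith) hV₁ (by linarith)
  have hlog := log_le_log (div_pos (by linarith) (by linarith)) hratio
  rw [hodd] at hinc
  nlinarith

end TiePoint

section Energy

variable {g : ℝ → ℝ}

lemma add_mul_deriv_le_two_mul (hconv : ConvexOn ℝ univ g) (hd : Differentiable ℝ g)
    (h0 : deriv g 0 = 0) (x : ℝ) :
    g 0 + x * deriv g x ≤ g (2 * x) := by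
  have h₁ := hconv.add_deriv_mul_sub_le (mem_univ 0) (mem_univ x) (hd 0)
  have h₂ := hconv.add_deriv_mul_sub_le (mem_univ x) (mem_univ (2 * x)) (hd x)
  rw [h0] at h₁
  linarith

lemma tie_sum_le (hconv : ConvexOn ℝ univ g) (hd : Differentiable ℝ g) (heven : g.Even)
    {t V₁ V₂ : ℝ}
    (htie : deriv g t + deriv g (t + V₁) + deriv g (t + V₁ + V₂) = 0) :
    g t + g (t + V₁) + g (t + V₁ + V₂) ≤
      g 0 + 2 * g ((V₁ + V₂) / 2) - (V₂ - V₁) / 2 * deriv g (t + V₁) := by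
  have hl := hconv.add_deriv_mul_sub_le (mem_univ t) (mem_univ (-((V₁ + V₂) / 2))) (hd t)
  have hm := hconv.add_deriv_mul_sub_le (mem_univ (t + V₁)) (mem_univ 0) (hd (t + V₁))
  have hr := hconv.add_deriv_mul_sub_le (mem_univ (t + V₁ + V₂)) (mem_univ ((V₁ + V₂) / 2))
    (hd (t + V₁ + V₂))
  rw [heven] at hl
  linear_combination hl + hm + hr + (t + (V₁ + V₂) / 2) * htie

lemma mul_deriv_quarter_le (hconv : ConvexOn ℝ univ g) (hd : Differentiable ℝ g)
    (heven : g.Even) (hφ : StrictMono (deriv g)) (hodd : (deriv g).Odd)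
    (hφd : DifferentiableOn ℝ (deriv g) (Ioi 0)) {C : ℝ} (hC0 : 0 ≤ C)
    (hC : ∀ v > 0, v * deriv (deriv g) v ≤ C) {t V₁ V₂ : ℝ} (hV₁ : 0 < V₁) (hV : V₁ ≤ V₂)
    (htie : deriv g t + deriv g (t + V₁) + deriv g (t + V₁ + V₂) = 0)
    (hμ : 2 * (g (V₁ / 2) + g ((V₁ + V₂) / 2)) = g t + g (t + V₁) + g (t + V₁ + V₂)) :
    V₁ * deriv g (V₁ / 4) ≤ -2 * g 0 + C * V₂ * log (V₂ / V₁) := by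
  have hsum := tie_sum_le hconv hd heven htie
  have hlow := add_mul_deriv_le_two_mul hconv hd hodd.map_zero (V₁ / 4)
  rw [show 2 * (V₁ / 4) = V₁ / 2 by ring] at hlow
  have hlog := neg_tie_middle_le_mul_log hφ hodd hφd hC0 hC hV₁ hV htie
  have hmid : 0 ≤ -deriv g (t + V₁) := by
    rw [neg_nonneg, ← hodd.map_zero]
    exact hφ.monotone (tie_middle_nonpos hφ hodd hV htie)
  nlinarith [mul_nonneg hV₁.le hmid, mul_nonneg (hV₁.le.trans hV) (sub_nonneg.2 hlog)]

end Energy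

/-- Superlinear growth of the tie function: for a `C²` even convex density `g` in
volume coordinates with `g'` strictly increasing, odd and unbounded, if `V·g''(V)` is
bounded on `(0,∞)` then the tie point satisfies `λ(V₁)/V₁ → ∞` as `V₁ → ∞`. -/
theorem tie_function_superlinear (g : ℝ → ℝ) (hg : ContDiff ℝ 2 g)
    (hg_even : ∀ v, g (-v) = g v) (hg_convex : ConvexOn ℝ Set.univ g)
    (hg' : StrictMono (deriv g)) (hg'_odd : ∀ v, deriv g (-v) = -deriv g v)
    (hg'_unbdd : ∀ c : ℝ, ∃ x, c < deriv g x)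
    (hg'' : ∃ C : ℝ, ∀ v > 0, v * deriv (deriv g) v ≤ C)
    (Vt : ℝ → ℝ → ℝ)
    (hVt : ∀ V₁ V₂, 0 < V₁ → V₁ ≤ V₂ →
      deriv g (Vt V₁ V₂) + deriv g (Vt V₁ V₂ + V₁) + deriv g (Vt V₁ V₂ + V₁ + V₂) = 0)
    (μ : ℝ → ℝ → ℝ)
    (hμ : ∀ V₁ V₂, μ V₁ V₂ = 2 * (g (V₁ / 2) + g ((V₁ + V₂) / 2)) -
      (g (Vt V₁ V₂) + g (Vt V₁ V₂ + V₁) + g (Vt V₁ V₂ + V₁ + V₂)))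
    (lam : ℝ → ℝ)
    (hlam : ∀ V₁ > 0, V₁ < lam V₁ ∧ μ V₁ (lam V₁) = 0) :
    Tendsto (fun V₁ => lam V₁ / V₁) atTop atTop := by
  obtain ⟨C, hC⟩ := hg''
  set C₁ := max C 1
  have hC₁ : ∀ v > 0, v * deriv (deriv g) v ≤ C₁ := fun v hv => (hC v hv).trans (le_max_left _ _)
  have hC₁pos : 0 < C₁ := zero_lt_one.trans_le (le_max_right _ _)
  have hd : Differentiable ℝ g := hg.differentiable (by norm_num)
  have hφd : Differentiable ℝ (deriv g) :=
    (contDiff_succ_iff_deriv.mp (by exact hg : ContDiff ℝ (1 + 1) g)).2.2.differentiable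
      one_ne_zero
  have hφtop : Tendsto (deriv g) atTop atTop :=
    tendsto_atTop_atTop_of_monotone hg'.monotone fun b => (hg'_unbdd b).imp fun _ => le_of_lt
  have hbound : ∀ᶠ V₁ in atTop, √((deriv g (V₁ / 4) - 1) / C₁) ≤ lam V₁ / V₁ := by
    filter_upwards [eventually_gt_atTop 0, eventually_ge_atTop (2 * |g 0|)] with V₁ hV₁ hg0
    obtain ⟨hlt, hzero⟩ := hlam V₁ hV₁
    have key := mul_deriv_quarter_le hg_convex hd hg_even hg' hg'_odd hφd.differentiableOn
      hC₁pos.le hC₁ hV₁ hlt.le (hVt V₁ _ hV₁ hlt.le) (by linarith [hμ V₁ (lam V₁)])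
    set r := lam V₁ / V₁
    have hr : 0 < r := div_pos (hV₁.trans hlt) hV₁
    have hlog : log r ≤ r := (log_le_sub_one_of_pos hr).trans (by linarith)
    rw [← div_mul_cancel₀ (lam V₁) hV₁.ne'] at key
    have : deriv g (V₁ / 4) - 1 ≤ C₁ * r ^ 2 := by
      nlinarith [neg_abs_le (g 0), mul_le_mul_of_nonneg_left hlog (by positivity : 0 ≤ C₁ * r * V₁)]
    calc √((deriv g (V₁ / 4) - 1) / C₁) ≤ √(r ^ 2) := sqrt_le_sqrt ((div_le_iff₀' hC₁pos).2 this)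
      _ = r := sqrt_sq hr.le
  refine tendsto_atTop_mono' atTop hbound (tendsto_sqrt_atTop.comp ?_)
  exact (tendsto_atTop_add_const_right _ _
    (hφtop.comp (tendsto_id.atTop_div_const (by norm_num)))).atTop_div_const hC₁pos
end

section
/- Let g: ℝ → ℝ be even, convex, nonconstant (density in volume coordinates). Fix an n-bubble combinatorial type represented by a tuple of volume-coordinate endpoints with prescribed component volumes. If B₁ and B₂ are two equilibrium configurations with the same prescribed volumes, then every point on the segment (1−t)B₁ + tB₂ also has the prescribed volumes, the perimeter function P(t) is convex in t, and B₁ and B₂ have equal perimeter. -/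
/-!
The perimeter `P v = ∑ i, g (v i)` is convex, so for an equilibrium `w` and any `v` with the
same volumes, `t ↦ P (w + t • (v - w))` is a convex function of one variable whose one-sided
derivatives at `0` have the signs of a critical point; hence it is minimal at `0`, giving
`P w ≤ P v`. Exchanging the roles of the two equilibria gives equality.
-/
open Set

lemma convexOn_univ_sum_apply {ι : Type*} [Fintype ι] {g : ℝ → ℝ}
    (hg : ConvexOn ℝ univ g) : ConvexOn ℝ univ (fun v : ι → ℝ => ∑ i, g (v i)) := by
  have := Finset.sum_induction (s := Finset.univ) (fun i (v : ι → ℝ) => g (v i))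
    (ConvexOn ℝ univ)
    (fun _ _ => ConvexOn.add) (convexOn_const 0 convex_univ)
    (fun i _ => hg.comp_linearMap (LinearMap.proj (R := ℝ) (φ := fun _ : ι => ℝ) i))
  rwa [Finset.sum_fn] at this

lemma ConvexOn.isMinOn_of_hasDerivWithinAt_Iic_nonpos_of_Ici_nonneg {S : Set ℝ} {f : ℝ → ℝ}
    {x : ℝ} (hf : ConvexOn ℝ S f) (hx : x ∈ interior S)
    (hl : ∀ L, HasDerivWithinAt f L (Iic x) x → L ≤ 0)
    (hr : ∀ L, HasDerivWithinAt f L (Ici x) x → 0 ≤ L) : IsMinOn f S x :=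
  hf.isMinOn_of_leftDeriv_nonpos_of_rightDeriv_nonneg hx
    (hl _ (hf.hasDerivWithinAt_leftDeriv_of_mem_interior hx).Iic_of_Iio)
    (hr _ (hf.hasDerivWithinAt_rightDeriv_of_mem_interior hx).Ici_of_Ioi)

lemma ConvexOn.le_of_hasDerivWithinAt_line {E : Type*} [AddCommGroup E] [Module ℝ E]
    {P : E → ℝ} (hP : ConvexOn ℝ univ P) {v w : E}
    (hr : ∀ L, HasDerivWithinAt (fun t : ℝ => P (w + t • (v - w))) L (Ici 0) 0 → 0 ≤ L)
    (hl : ∀ L, HasDerivWithinAt (fun t : ℝ => P (w + t • (v - w))) L (Iic 0) 0 → L ≤ 0) :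
    P w ≤ P v := by
  have hline : ConvexOn ℝ univ (fun t : ℝ => P (w + t • (v - w))) := by
    refine (hP.comp_affineMap (AffineMap.lineMap w v)).congr fun t _ => ?_
    simp [AffineMap.lineMap_apply, add_comm]
  simpa using hline.isMinOn_of_hasDerivWithinAt_Iic_nonpos_of_Ici_nonneg (by simp) hl hr
    (mem_univ 1)

theorem equilibria_equal_perimeter_general {k n : ℕ}
    (g : ℝ → ℝ)
    (hg_convex : ConvexOn ℝ Set.univ g)
    (vol : (Fin k → ℝ) →ₗ[ℝ] (Fin n → ℝ))
    (P : (Fin k → ℝ) → ℝ) (hP : ∀ v, P v = ∑ i, g (v i))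
    (equilibrium : (Fin k → ℝ) → Prop)
    (hequil : ∀ v, equilibrium v ↔ ∀ d : Fin k → ℝ, vol d = 0 →
      (∀ dR : ℝ, HasDerivWithinAt (fun t : ℝ => P (v + t • d)) dR (Set.Ici 0) 0 →
        0 ≤ dR) ∧
      (∀ dL : ℝ, HasDerivWithinAt (fun t : ℝ => P (v + t • d)) dL (Set.Iic 0) 0 →
        dL ≤ 0))
    (B₁ B₂ : Fin k → ℝ) (h₁ : equilibrium B₁) (h₂ : equilibrium B₂)
    (hvol : vol B₁ = vol B₂) :
    (∀ t ∈ Set.Icc (0:ℝ) 1, vol ((1 - t) • B₁ + t • B₂) = vol B₁) ∧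
      ConvexOn ℝ (Set.Icc (0:ℝ) 1) (fun t => P ((1 - t) • B₁ + t • B₂)) ∧
      P B₁ = P B₂ := by
  have hPconv : ConvexOn ℝ univ P := funext hP ▸ convexOn_univ_sum_apply hg_convex
  have equilibrium_le : ∀ v w, equilibrium w → vol v = vol w → P w ≤ P v := by
    intro v w hw hv
    have hd := (hequil w).1 hw (v - w) (by rw [map_sub, hv, sub_self])
    exact hPconv.le_of_hasDerivWithinAt_line hd.1 hd.2
  refine ⟨fun t _ => ?_, ?_, (equilibrium_le B₂ B₁ h₁ hvol.symm).antisymm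
    (equilibrium_le B₁ B₂ h₂ hvol)⟩
  · rw [map_add, map_smul, map_smul, ← hvol, ← add_smul, sub_add_cancel, one_smul]
  · simp_rw [← AffineMap.lineMap_apply_module]
    exact (hPconv.comp_affineMap _).subset (subset_univ _) (convex_Icc 0 1)

/-- Equilibria of a fixed combinatorial type are perimeter minimizing (non-strict
log-convexity): let `g` be even, convex, nonconstant (density in volume coordinates),
represent an `n`-bubble by its tuple of endpoints in volume coordinates, with the
component volumes given by a linear map `vol`. If `B₁` and `B₂` are equilibria with the
same prescribed volumes, then every point of the segment between them has the
prescribed volumes, the perimeter along the segment is convex, and `B₁` and `B₂` have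
equal perimeter. Equilibrium means the one-sided derivatives of perimeter along every
volume-preserving direction are `≥ 0` (from the right) and `≤ 0` (from the left). -/
theorem equilibria_equal_perimeter {k n : ℕ}
    (g : ℝ → ℝ) (hg_even : ∀ v, g (-v) = g v)
    (hg_convex : ConvexOn ℝ Set.univ g) (hg_nonconst : ∃ a b : ℝ, g a ≠ g b)
    (vol : (Fin k → ℝ) →ₗ[ℝ] (Fin n → ℝ))
    (P : (Fin k → ℝ) → ℝ) (hP : ∀ v, P v = ∑ i, g (v i))
    (equilibrium : (Fin k → ℝ) → Prop)
    (hequil : ∀ v, equilibrium v ↔ ∀ d : Fin k → ℝ, vol d = 0 →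
      (∀ dR : ℝ, HasDerivWithinAt (fun t : ℝ => P (v + t • d)) dR (Set.Ici 0) 0 →
        0 ≤ dR) ∧
      (∀ dL : ℝ, HasDerivWithinAt (fun t : ℝ => P (v + t • d)) dL (Set.Iic 0) 0 →
        dL ≤ 0))
    (B₁ B₂ : Fin k → ℝ) (h₁ : equilibrium B₁) (h₂ : equilibrium B₂)
    (hvol : vol B₁ = vol B₂) :
    (∀ t ∈ Set.Icc (0:ℝ) 1, vol ((1 - t) • B₁ + t • B₂) = vol B₁) ∧
      ConvexOn ℝ (Set.Icc (0:ℝ) 1) (fun t => P ((1 - t) • B₁ + t • B₂)) ∧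
      P B₁ = P B₂ :=
  equilibria_equal_perimeter_general g hg_convex vol P hP equilibrium hequil B₁ B₂ h₁ h₂ hvol
end
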